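/- arXiv:1110.0799 — 12 statements merged into one kernel-verified Lean document; each statement's English description precedes it below -/
import Mathlib

section
/- Energy identity for smooth solutions of the reduced shallow viscoelastic model: let g, eta_p, lambda > 0 be constants and b : ℝ → ℝ be continuously differentiable. Suppose h, u, sxx, szz : ℝ × ℝ → ℝ are continuously differentiable functions of (t,x) with h > 0, sxx > 0, szz > 0 everywhere, satisfying pointwise the system: ∂t h + ∂x(h u) = 0; ∂t(h u) + ∂x( h u² + g h²/2 + (eta_p/(2 lambda)) h (szz − sxx) ) = −g h ∂x b; ∂t sxx + u ∂x sxx − 2 sxx ∂x u = (1 − sxx)/lambda; ∂t szz + u ∂x szz + 2 szz ∂x u = (1 − szz)/lambda. Define the energy E = h u²/2 + g h²/2 + g b h + (eta_p/(4 lambda)) h (sxx + szz − log(sxx szz) − 2) and the pressure P = g h²/2 + (eta_p/(2 lambda)) h (szz − sxx). Then pointwise ∂t E + ∂x( (E + P) u ) = −(eta_p/(4 lambda²)) h ( sxx + 1/sxx + szz + 1/szz − 4 ). -/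
/-!
`E` is a mathematical entropy of the system in the variables `(h, hu, σxx, σzz)`, with
entropy variables
`∂E/∂h = -u²/2 + g h + g b + κ ψ`, `∂E/∂(hu) = u`, `∂E/∂σ = κ h (1 - 1/σ)`,
where `κ = ηp/(4λ)` and `ψ = σxx + σzz - log (σxx σzz) - 2`. Summing the four equations
against these multipliers gives `∂t E + ∂x ((E + P) u)` on the left; on the right only the
relaxation terms survive, `κ h (1 - 1/σ) (1 - σ)/λ = -(ηp/(4λ²)) h (σ + 1/σ - 2)`.
-/

/-- Energy of the reduced shallow viscoelastic model. -/
noncomputable def svEnergy (g eta_p lam : ℝ) (b : ℝ → ℝ)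
    (h u sxx szz : ℝ × ℝ → ℝ) (p : ℝ × ℝ) : ℝ :=
  h p * (u p) ^ 2 / 2 + g * (h p) ^ 2 / 2 + g * b p.2 * h p +
    eta_p / (4 * lam) * h p *
      (sxx p + szz p - Real.log (sxx p * szz p) - 2)

/-- Pressure of the reduced shallow viscoelastic model. -/
noncomputable def svPressure (g eta_p lam : ℝ)
    (h sxx szz : ℝ × ℝ → ℝ) (p : ℝ × ℝ) : ℝ :=
  g * (h p) ^ 2 / 2 + eta_p / (2 * lam) * h p * (szz p - sxx p)

theorem DifferentiableAt.hasDerivAt_fst_slice {f : ℝ × ℝ → ℝ} {t x : ℝ}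
    (hf : DifferentiableAt ℝ f (t, x)) :
    HasDerivAt (fun s => f (s, x)) (deriv (fun s => f (s, x)) t) t :=
  (hf.comp t (differentiableAt_id.prodMk (differentiableAt_const x))).hasDerivAt

theorem DifferentiableAt.hasDerivAt_snd_slice {f : ℝ × ℝ → ℝ} {t x : ℝ}
    (hf : DifferentiableAt ℝ f (t, x)) :
    HasDerivAt (fun y => f (t, y)) (deriv (fun y => f (t, y)) x) x :=
  (hf.comp x ((differentiableAt_const t).prodMk differentiableAt_id)).hasDerivAt

section Densities

variable {g κ μ : ℝ} {H U A B β : ℝ → ℝ} {H' U' A' B' β' y : ℝ}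

theorem HasDerivAt.add_sub_log_mul_sub_two (hA : HasDerivAt A A' y) (hB : HasDerivAt B B' y)
    (hA0 : A y ≠ 0) (hB0 : B y ≠ 0) :
    HasDerivAt (fun y => A y + B y - Real.log (A y * B y) - 2)
      (A' * (1 - (A y)⁻¹) + B' * (1 - (B y)⁻¹)) y := by
  refine (((hA.fun_add hB).fun_sub ((hA.fun_mul hB).log (mul_ne_zero hA0 hB0))).sub_const 2
    ).congr_deriv ?_
  field_simp
  ring

theorem HasDerivAt.svEnergy_density (hH : HasDerivAt H H' y) (hU : HasDerivAt U U' y)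
    (hA : HasDerivAt A A' y) (hB : HasDerivAt B B' y) (hβ : HasDerivAt β β' y)
    (hA0 : A y ≠ 0) (hB0 : B y ≠ 0) :
    HasDerivAt (fun y => H y * U y ^ 2 / 2 + g * H y ^ 2 / 2 + g * β y * H y +
        κ * H y * (A y + B y - Real.log (A y * B y) - 2))
      (H' * (U y ^ 2 / 2 + g * H y + g * β y + κ * (A y + B y - Real.log (A y * B y) - 2)) +
        H y * (U y * U' + g * β' + κ * (A' * (1 - (A y)⁻¹) + B' * (1 - (B y)⁻¹)))) y := by
  refine ((((hH.fun_mul (hU.fun_pow 2)).div_const 2).fun_add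
    (((hH.fun_pow 2).const_mul g).div_const 2)).fun_add ((hβ.const_mul g).fun_mul hH)
    |>.fun_add ((hH.const_mul κ).fun_mul (hA.add_sub_log_mul_sub_two hB hA0 hB0))).congr_deriv ?_
  ring

theorem HasDerivAt.svPressure_density (hH : HasDerivAt H H' y) (hA : HasDerivAt A A' y)
    (hB : HasDerivAt B B' y) :
    HasDerivAt (fun y => g * H y ^ 2 / 2 + μ * H y * (B y - A y))
      (g * H y * H' + μ * (H' * (B y - A y) + H y * (B' - A'))) y := by
  refine ((((hH.fun_pow 2).const_mul g).div_const 2).fun_add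
    ((hH.const_mul μ).fun_mul (hB.fun_sub hA))).congr_deriv ?_
  ring

theorem HasDerivAt.svMomentum_flux (hH : HasDerivAt H H' y) (hU : HasDerivAt U U' y)
    (hA : HasDerivAt A A' y) (hB : HasDerivAt B B' y) :
    HasDerivAt (fun y => H y * U y ^ 2 + g * H y ^ 2 / 2 + μ * H y * (B y - A y))
      (H' * U y ^ 2 + 2 * H y * U y * U' +
        (g * H y * H' + μ * (H' * (B y - A y) + H y * (B' - A')))) y := by
  refine (((hH.fun_mul (hU.fun_pow 2)).fun_add (((hH.fun_pow 2).const_mul g).div_const 2)).fun_add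
    ((hH.const_mul μ).fun_mul (hB.fun_sub hA))).congr_deriv ?_
  ring

end Densities

theorem energy_identity_reduced_model_general
    (g eta_p lam : ℝ)
    (b : ℝ → ℝ) (hb : ContDiff ℝ 1 b)
    (h u sxx szz : ℝ × ℝ → ℝ)
    (hh : ContDiff ℝ 1 h) (hu : ContDiff ℝ 1 u)
    (hsxx : ContDiff ℝ 1 sxx) (hszz : ContDiff ℝ 1 szz)
    (hsxxpos : ∀ p, 0 < sxx p) (hszzpos : ∀ p, 0 < szz p)
    (mass : ∀ t x : ℝ,
      deriv (fun s => h (s, x)) t + deriv (fun y => h (t, y) * u (t, y)) x = 0)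
    (momentum : ∀ t x : ℝ,
      deriv (fun s => h (s, x) * u (s, x)) t +
        deriv (fun y => h (t, y) * (u (t, y)) ^ 2 + g * (h (t, y)) ^ 2 / 2 +
          eta_p / (2 * lam) * h (t, y) * (szz (t, y) - sxx (t, y))) x
        = - (g * h (t, x) * deriv b x))
    (stress_xx : ∀ t x : ℝ,
      deriv (fun s => sxx (s, x)) t + u (t, x) * deriv (fun y => sxx (t, y)) x -
        2 * sxx (t, x) * deriv (fun y => u (t, y)) x = (1 - sxx (t, x)) / lam)
    (stress_zz : ∀ t x : ℝ,
      deriv (fun s => szz (s, x)) t + u (t, x) * deriv (fun y => szz (t, y)) x +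
        2 * szz (t, x) * deriv (fun y => u (t, y)) x = (1 - szz (t, x)) / lam) :
    ∀ t x : ℝ,
      deriv (fun s => svEnergy g eta_p lam b h u sxx szz (s, x)) t +
        deriv (fun y => (svEnergy g eta_p lam b h u sxx szz (t, y) +
          svPressure g eta_p lam h sxx szz (t, y)) * u (t, y)) x
      = - (eta_p / (4 * lam ^ 2)) * h (t, x) *
          (sxx (t, x) + (sxx (t, x))⁻¹ + szz (t, x) + (szz (t, x))⁻¹ - 4) := by
  intro t x
  have slice_t (f : ℝ × ℝ → ℝ) (hf : ContDiff ℝ 1 f) :=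
    (hf.differentiable one_ne_zero (t, x)).hasDerivAt_fst_slice
  have slice_x (f : ℝ × ℝ → ℝ) (hf : ContDiff ℝ 1 f) :=
    (hf.differentiable one_ne_zero (t, x)).hasDerivAt_snd_slice
  have hsxx0 := (hsxxpos (t, x)).ne'
  have hszz0 := (hszzpos (t, x)).ne'
  have mass_tx := mass t x
  rw [((slice_x h hh).fun_mul (slice_x u hu)).deriv] at mass_tx
  have momentum_tx := momentum t x
  rw [((slice_t h hh).fun_mul (slice_t u hu)).deriv,
    ((slice_x h hh).svMomentum_flux (slice_x u hu) (slice_x sxx hsxx) (slice_x szz hszz)).deriv]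
    at momentum_tx
  simp only [svEnergy, svPressure]
  rw [((slice_t h hh).svEnergy_density (slice_t u hu) (slice_t sxx hsxx) (slice_t szz hszz)
      (hasDerivAt_const t (b x)) hsxx0 hszz0).deriv,
    ((((slice_x h hh).svEnergy_density (slice_x u hu) (slice_x sxx hsxx) (slice_x szz hszz)
      (hb.differentiable one_ne_zero x).hasDerivAt hsxx0 hszz0).fun_add
      ((slice_x h hh).svPressure_density (slice_x sxx hsxx) (slice_x szz hszz))).fun_mul
      (slice_x u hu)).deriv]
  linear_combination (norm := (field_simp; ring))
    (-u (t, x) ^ 2 / 2 + g * h (t, x) + g * b x +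
      eta_p / (4 * lam) * (sxx (t, x) + szz (t, x) - Real.log (sxx (t, x) * szz (t, x)) - 2)) *
      mass_tx +
    u (t, x) * momentum_tx +
    eta_p / (4 * lam) * h (t, x) * (1 - (sxx (t, x))⁻¹) * stress_xx t x +
    eta_p / (4 * lam) * h (t, x) * (1 - (szz (t, x))⁻¹) * stress_zz t x

/-- Energy identity for smooth solutions of the reduced shallow viscoelastic model. -/
theorem energy_identity_reduced_model
    (g eta_p lam : ℝ) (hg : 0 < g) (hetap : 0 < eta_p) (hlam : 0 < lam)
    (b : ℝ → ℝ) (hb : ContDiff ℝ 1 b)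
    (h u sxx szz : ℝ × ℝ → ℝ)
    (hh : ContDiff ℝ 1 h) (hu : ContDiff ℝ 1 u)
    (hsxx : ContDiff ℝ 1 sxx) (hszz : ContDiff ℝ 1 szz)
    (hhpos : ∀ p, 0 < h p) (hsxxpos : ∀ p, 0 < sxx p) (hszzpos : ∀ p, 0 < szz p)
    (mass : ∀ t x : ℝ,
      deriv (fun s => h (s, x)) t + deriv (fun y => h (t, y) * u (t, y)) x = 0)
    (momentum : ∀ t x : ℝ,
      deriv (fun s => h (s, x) * u (s, x)) t +
        deriv (fun y => h (t, y) * (u (t, y)) ^ 2 + g * (h (t, y)) ^ 2 / 2 +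
          eta_p / (2 * lam) * h (t, y) * (szz (t, y) - sxx (t, y))) x
        = - (g * h (t, x) * deriv b x))
    (stress_xx : ∀ t x : ℝ,
      deriv (fun s => sxx (s, x)) t + u (t, x) * deriv (fun y => sxx (t, y)) x -
        2 * sxx (t, x) * deriv (fun y => u (t, y)) x = (1 - sxx (t, x)) / lam)
    (stress_zz : ∀ t x : ℝ,
      deriv (fun s => szz (s, x)) t + u (t, x) * deriv (fun y => szz (t, y)) x +
        2 * szz (t, x) * deriv (fun y => u (t, y)) x = (1 - szz (t, x)) / lam) :
    ∀ t x : ℝ,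
      deriv (fun s => svEnergy g eta_p lam b h u sxx szz (s, x)) t +
        deriv (fun y => (svEnergy g eta_p lam b h u sxx szz (t, y) +
          svPressure g eta_p lam h sxx szz (t, y)) * u (t, y)) x
      = - (eta_p / (4 * lam ^ 2)) * h (t, x) *
          (sxx (t, x) + (sxx (t, x))⁻¹ + szz (t, x) + (szz (t, x))⁻¹ - 4) :=
  energy_identity_reduced_model_general g eta_p lam b hb h u sxx szz hh hu hsxx hszz hsxxpos hszzpos
    mass momentum stress_xx stress_zz
end

section
/- Convexity of the physical energy in the pseudo-conservative variables: let g, eta_p, lambda > 0 and b ∈ ℝ be constants. The function E : ℝ⁴ → ℝ defined on the open convex set { q ∈ ℝ⁴ : q₁ > 0, q₃ > 0, q₄ > 0 } by E(q₁,q₂,q₃,q₄) = q₂²/(2 q₁) + g q₁²/2 + g b q₁ + (eta_p/(4 lambda)) ( q₃ + q₄ − q₁ log( q₃ q₄ / q₁² ) − 2 q₁ ) is convex on this set. -/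
/-!
Writing `q = (h, h v)` with `v = (u, σxx, σzz)`, the energy is
`h * e (h⁻¹ • (q₂, q₃, q₄)) + g h² / 2 + g b h` with the energy density
`e (u, σ₁, σ₂) = u² / 2 + c (σ₁ - 1 - log σ₁) + c (σ₂ - 1 - log σ₂)`, `c = η_p / (4 λ)`.
The density is a separable sum of convex functions, hence convex, and the perspective
`(h, w) ↦ h * e (h⁻¹ • w)` of a convex function is jointly convex: at a convex combination
`t (a, x) + u (b, y)`, the point `(t a + u b)⁻¹ • (t x + u y)` is the convex combination of
`a⁻¹ • x` and `b⁻¹ • y` with weights proportional to `t a` and `u b`.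
-/

open Real Set

section Perspective

variable {E F : Type*} [AddCommGroup E] [Module ℝ E] [AddCommGroup F] [Module ℝ F]

lemma inv_smul_add_eq_weighted {a b t u : ℝ} (ha : a ≠ 0) (hb : b ≠ 0) (hz : t * a + u * b ≠ 0)
    (x y : F) :
    (t * a + u * b)⁻¹ • (t • x + u • y) =
      (t * a / (t * a + u * b)) • (a⁻¹ • x) + (u * b / (t * a + u * b)) • (b⁻¹ • y) := by
  match_scalars <;> field_simp

lemma weighted_add_weighted {a b t u : ℝ} (hz : t * a + u * b ≠ 0) :
    t * a / (t * a + u * b) + u * b / (t * a + u * b) = 1 := by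
  rw [← add_div, div_self hz]

theorem ConvexOn.perspective {s : Set F} {f : F → ℝ} (hf : ConvexOn ℝ s f) :
    ConvexOn ℝ {p : ℝ × F | 0 < p.1 ∧ p.1⁻¹ • p.2 ∈ s} fun p => p.1 * f (p.1⁻¹ • p.2) := by
  refine ⟨?_, ?_⟩
  · rintro ⟨a, x⟩ ⟨ha, hx⟩ ⟨b, y⟩ ⟨hb, hy⟩ t u ht hu htu
    have hz : 0 < t * a + u * b := convex_Ioi (0 : ℝ) ha hb ht hu htu
    refine ⟨hz, ?_⟩
    simp only [Prod.smul_mk, Prod.mk_add_mk, smul_eq_mul]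
    rw [inv_smul_add_eq_weighted ha.ne' hb.ne' hz.ne']
    exact hf.1 hx hy (by positivity) (by positivity) (weighted_add_weighted hz.ne')
  · rintro ⟨a, x⟩ ⟨ha, hx⟩ ⟨b, y⟩ ⟨hb, hy⟩ t u ht hu htu
    have hz : 0 < t * a + u * b := convex_Ioi (0 : ℝ) ha hb ht hu htu
    simp only [Prod.smul_mk, Prod.mk_add_mk, smul_eq_mul]
    rw [inv_smul_add_eq_weighted ha.ne' hb.ne' hz.ne']
    calc (t * a + u * b) * f ((t * a / (t * a + u * b)) • (a⁻¹ • x) +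
            (u * b / (t * a + u * b)) • (b⁻¹ • y))
        ≤ (t * a + u * b) * (t * a / (t * a + u * b) * f (a⁻¹ • x) +
            u * b / (t * a + u * b) * f (b⁻¹ • y)) :=
          mul_le_mul_of_nonneg_left (hf.2 hx hy (by positivity) (by positivity)
            (weighted_add_weighted hz.ne')) hz.le
      _ = t * (a * f (a⁻¹ • x)) + u * (b * f (b⁻¹ • y)) := by field_simp

theorem ConvexOn.prod_add {s : Set E} {t : Set F} {f : E → ℝ} {g : F → ℝ}
    (hf : ConvexOn ℝ s f) (hg : ConvexOn ℝ t g) :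
    ConvexOn ℝ (s ×ˢ t) fun p => f p.1 + g p.2 := by
  refine ⟨hf.1.prod hg.1, ?_⟩
  rintro ⟨x, y⟩ ⟨hx, hy⟩ ⟨x', y'⟩ ⟨hx', hy'⟩ a b ha hb hab
  have hfx := hf.2 hx hx' ha hb hab
  have hgy := hg.2 hy hy' ha hb hab
  simp only [Prod.smul_mk, Prod.mk_add_mk, smul_eq_mul] at *
  linarith

end Perspective

lemma convexOn_sub_one_sub_log : ConvexOn ℝ (Ioi 0) fun x : ℝ => x - 1 - log x := by
  have h := (convexOn_id (convex_Ioi (0 : ℝ))).add strictConcaveOn_log_Ioi.concaveOn.neg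
  refine (h.add_const (-1)).congr fun x _ => ?_
  simp only [Pi.add_apply, Pi.neg_apply, id]
  ring

lemma convexOn_quadratic {α β : ℝ} (hα : 0 ≤ α) :
    ConvexOn ℝ univ fun x : ℝ => α * x ^ 2 + β * x :=
  ((Even.convexOn_pow even_two).smul hα).add
    (LinearMap.convexOn (β • LinearMap.id) convex_univ) |>.congr fun x _ => by simp

/-- Convexity of the physical energy in the pseudo-conservative variables
`q = (h, h u, h σxx, h σzz)`. -/
theorem energy_convex_pseudo_conservative
    (g eta_p lam b : ℝ) (hg : 0 < g) (hetap : 0 < eta_p) (hlam : 0 < lam) :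
    ConvexOn ℝ {q : ℝ × ℝ × ℝ × ℝ | 0 < q.1 ∧ 0 < q.2.2.1 ∧ 0 < q.2.2.2}
      (fun q : ℝ × ℝ × ℝ × ℝ =>
        q.2.1 ^ 2 / (2 * q.1) + g * q.1 ^ 2 / 2 + g * b * q.1 +
          eta_p / (4 * lam) *
            (q.2.2.1 + q.2.2.2 - q.1 * Real.log (q.2.2.1 * q.2.2.2 / q.1 ^ 2)
              - 2 * q.1)) := by
  set c := eta_p / (4 * lam)
  have hrelax := convexOn_sub_one_sub_log.smul (by positivity : 0 ≤ c)
  have hdensity : ConvexOn ℝ (univ ×ˢ Ioi 0 ×ˢ Ioi 0) fun v : ℝ × ℝ × ℝ =>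
      v.1 ^ 2 / 2 + (c * (v.2.1 - 1 - log v.2.1) + c * (v.2.2 - 1 - log v.2.2)) :=
    ((Even.convexOn_pow even_two).smul (by norm_num : (0 : ℝ) ≤ 1 / 2)).prod_add
      (hrelax.prod_add hrelax) |>.congr fun v _ => by simp [div_eq_inv_mul]
  have hgravity := (convexOn_quadratic (β := g * b) (by positivity : 0 ≤ g / 2)).comp_linearMap
    (LinearMap.fst ℝ ℝ (ℝ × ℝ × ℝ))
  have hdomain : {q : ℝ × ℝ × ℝ × ℝ | 0 < q.1 ∧ 0 < q.2.2.1 ∧ 0 < q.2.2.2} =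
      {q | 0 < q.1 ∧ q.1⁻¹ • q.2 ∈ univ ×ˢ Ioi 0 ×ˢ Ioi 0} := by
    ext ⟨h, m, s₁, s₂⟩
    exact and_congr_right fun hh => by simp [mul_pos_iff_of_pos_left, hh]
  have hE := hdensity.perspective.add (hgravity.subset (subset_univ _) hdensity.perspective.1)
  rw [← hdomain] at hE
  refine hE.congr fun ⟨h, m, s₁, s₂⟩ ⟨hh, h₁, h₂⟩ => ?_
  have hlog : log (s₁ * s₂ / h ^ 2) = log (h⁻¹ * s₁) + log (h⁻¹ * s₂) := by
    rw [← log_mul (by positivity) (by positivity)]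
    field_simp
  simp only [Prod.smul_mk, smul_eq_mul, Pi.add_apply, Function.comp_apply, LinearMap.fst_apply,
    hlog]
  field_simp
  ring
end

section
/- Non-convexity of the energy with respect to any conservative variables: let g, eta_p, lambda > 0 be constants, and let Omega, zeta : ℝ → ℝ be twice continuously differentiable functions such that Omega' is not identically zero (there exists x₀ with Omega'(x₀) ≠ 0). Then the function defined on (0,∞) × ℝ × ℝ × ℝ by (V₁,V₂,V₃,V₄) ↦ V₂²/2 + g/(2 V₁) + (eta_p/(4 lambda)) ( V₁² exp(−Omega(V₃)) + V₁^{−2} exp(−zeta(V₄)) + Omega(V₃) + zeta(V₄) − 2 ) is NOT convex on this set. -/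
/-!
Rescaling `V₁ ↦ V₁ / μ` and multiplying by `μ² / k`, the energy tends as `μ → 0⁺` to the
quadratic-over-linear function `(V₁, V₃) ↦ V₁² / exp (Ω V₃)`, which is therefore convex on
`V₁ > 0`. Minimising it over `V₁` along segments shows that `exp ∘ Ω` is concave. A concave
function on `ℝ` that is bounded below is constant, so `Ω` is constant and `Ω'` vanishes
everywhere.
-/

open Set Filter Topology Real

theorem ConvexOn.of_tendsto {E ι : Type*} [AddCommGroup E] [Module ℝ E] {s : Set E}
    {l : Filter ι} [l.NeBot] {F : ι → E → ℝ} {f : E → ℝ}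
    (hF : ∀ᶠ i in l, ConvexOn ℝ s (F i))
    (hlim : ∀ x ∈ s, Tendsto (fun i => F i x) l (𝓝 (f x))) :
    ConvexOn ℝ s f := by
  obtain ⟨i, hi⟩ := hF.exists
  refine ⟨hi.1, fun x hx y hy a b ha hb hab => ?_⟩
  exact le_of_tendsto_of_tendsto (hlim _ (hi.1 hx hy ha hb hab))
    (((hlim x hx).const_mul a).add ((hlim y hy).const_mul b))
    (hF.mono fun j hj => hj.2 hx hy ha hb hab)

theorem concaveOn_of_convexOn_sq_div {E : Type*} [AddCommGroup E] [Module ℝ E] {s : Set E}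
    {φ : E → ℝ} (hφ : ∀ x ∈ s, 0 < φ x)
    (h : ConvexOn ℝ (Ioi 0 ×ˢ s) fun p : ℝ × E => p.1 ^ 2 / φ p.2) :
    ConcaveOn ℝ s φ := by
  have hs : Convex ℝ s := by
    simpa [snd_image_prod nonempty_Ioi] using h.1.linear_image (LinearMap.snd ℝ ℝ E)
  refine ⟨hs, fun x hx y hy a b ha hb hab => ?_⟩
  set c := a * φ x + b * φ y
  have hc : 0 < c := by
    rcases ha.eq_or_lt with rfl | ha
    · simp_all [c]
    · have := hφ x hx; have := hφ y hy; positivity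
  have hm := hφ _ (hs hx hy ha hb hab)
  -- `(φ x / c, φ y / c)` minimises `a v₁² / φ x + b v₂² / φ y` subject to `a v₁ + b v₂ = 1`
  have key := h.2 (x := (φ x / c, x)) (y := (φ y / c, y))
    ⟨div_pos (hφ x hx) hc, hx⟩ ⟨div_pos (hφ y hy) hc, hy⟩ ha hb hab
  have hx' := (hφ x hx).ne'
  have hy' := (hφ y hy).ne'
  have hsum : a * (φ x / c) + b * (φ y / c) = 1 := by field_simp; rfl
  have hrhs : a * ((φ x / c) ^ 2 / φ x) + b * ((φ y / c) ^ 2 / φ y) = 1 / c := by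
    field_simp; ring
  simp only [Prod.smul_mk, Prod.mk_add_mk, smul_eq_mul, hsum, hrhs] at key
  rw [one_pow, one_div_le_one_div hm hc] at key
  exact key

theorem ConcaveOn.antitone_of_bddBelow {φ : ℝ → ℝ} (hφ : ConcaveOn ℝ univ φ)
    (hb : BddBelow (range φ)) : Antitone φ := by
  intro x y hxy
  rcases hxy.eq_or_lt with rfl | hxy
  · rfl
  by_contra! hlt
  obtain ⟨c, hc⟩ := hb
  have hcx := hc (mem_range_self x)
  obtain ⟨s, hs_def⟩ : ∃ s, s = (φ y - φ x) / (y - x) := ⟨_, rfl⟩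
  have hs : 0 < s := hs_def ▸ div_pos (by linarith) (by linarith)
  -- the secant through `x` and `y` drops below `c - 1` at `t`, and `φ t` lies below that secant
  obtain ⟨t, ht_def⟩ : ∃ t, t = x - (φ x - c + 1) / s := ⟨_, rfl⟩
  have hxt : x - t = (φ x - c + 1) / s := by rw [ht_def]; ring
  have ht : t < x := by
    have : 0 < (φ x - c + 1) / s := div_pos (by linarith) hs
    linarith
  have hslope := hφ.slope_anti_adjacent (mem_univ t) (mem_univ y) ht hxy
  rw [← hs_def, hxt, le_div_iff₀ (div_pos (by linarith) hs), mul_div_cancel₀ _ hs.ne'] at hslope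
  linarith [hc (mem_range_self t)]

theorem ConcaveOn.eq_of_bddBelow {φ : ℝ → ℝ} (hφ : ConcaveOn ℝ univ φ)
    (hb : BddBelow (range φ)) (x y : ℝ) : φ x = φ y := by
  have hanti := hφ.antitone_of_bddBelow hb
  have hanti_neg : Antitone (φ ∘ Neg.neg) :=
    (hφ.comp_linearMap (-LinearMap.id)).antitone_of_bddBelow
      (hb.mono (range_comp_subset_range _ _))
  rcases le_total x y with hxy | hxy
  · exact le_antisymm (by simpa using hanti_neg (neg_le_neg hxy)) (hanti hxy)
  · exact le_antisymm (hanti hxy) (by simpa using hanti_neg (neg_le_neg hxy))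

noncomputable def shallowEnergy (g k : ℝ) (Ω ζ : ℝ → ℝ) (V : ℝ × ℝ × ℝ × ℝ) : ℝ :=
  V.2.1 ^ 2 / 2 + g / (2 * V.1) +
    k * (V.1 ^ 2 * exp (-Ω V.2.2.1) + (V.1 ^ 2)⁻¹ * exp (-ζ V.2.2.2) + Ω V.2.2.1 + ζ V.2.2.2 - 2)

theorem tendsto_shallowEnergy_rescaled (g : ℝ) {k : ℝ} (hk : k ≠ 0) (Ω ζ : ℝ → ℝ) {v : ℝ}
    (hv : v ≠ 0) (w : ℝ) :
    Tendsto (fun μ => μ ^ 2 / k * shallowEnergy g k Ω ζ (v / μ, 0, w, 0)) (𝓝[>] 0)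
      (𝓝 (v ^ 2 / exp (Ω w))) := by
  set P : ℝ → ℝ := fun μ => g * μ ^ 3 / (2 * k * v) + v ^ 2 / exp (Ω w) +
      μ ^ 4 * exp (-ζ 0) / v ^ 2 + μ ^ 2 * (Ω w + ζ 0 - 2)
  have hpoly : Tendsto P (𝓝[>] 0) (𝓝 (v ^ 2 / exp (Ω w))) := by
    have hP : Continuous P := by fun_prop
    simpa [P] using hP.continuousWithinAt.tendsto (s := Ioi 0) (x := 0)
  refine hpoly.congr' (eventually_nhdsWithin_of_forall fun μ (hμ : 0 < μ) => ?_)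
  simp only [P, shallowEnergy, exp_neg]
  field_simp
  ring

theorem concaveOn_exp_of_convexOn_shallowEnergy {g k : ℝ} (hk : 0 < k) {Ω ζ : ℝ → ℝ}
    (h : ConvexOn ℝ {V | 0 < V.1} (shallowEnergy g k Ω ζ)) :
    ConcaveOn ℝ univ fun w => exp (Ω w) := by
  refine concaveOn_of_convexOn_sq_div (fun w _ => exp_pos _) ?_
  refine ConvexOn.of_tendsto (l := 𝓝[>] 0)
    (F := fun μ p => μ ^ 2 / k * shallowEnergy g k Ω ζ (p.1 / μ, 0, p.2, 0)) ?_ ?_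
  · filter_upwards [self_mem_nhdsWithin] with μ (hμ : 0 < μ)
    let L : ℝ × ℝ →ₗ[ℝ] ℝ × ℝ × ℝ × ℝ :=
      (μ⁻¹ • LinearMap.fst ℝ ℝ ℝ).prod (LinearMap.prod 0 ((LinearMap.snd ℝ ℝ ℝ).prod 0))
    have hL : Ioi 0 ×ˢ univ ⊆ L ⁻¹' {V | 0 < V.1} := fun p hp => by
      simpa [L] using mul_pos (inv_pos.2 hμ) hp.1
    refine (((h.comp_linearMap L).subset hL ((convex_Ioi 0).prod convex_univ)).smul
      (div_nonneg (sq_nonneg μ) hk.le)).congr fun p _ => ?_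
    simp [L, div_eq_inv_mul]
  · rintro ⟨v, w⟩ ⟨hv, -⟩
    exact tendsto_shallowEnergy_rescaled g hk.ne' Ω ζ (ne_of_gt hv) w

theorem energy_not_convex_conservative_variables_general
    (g eta_p lam : ℝ) (hetap : 0 < eta_p) (hlam : 0 < lam)
    (Omega zeta : ℝ → ℝ)
    (hOmega' : ∃ x₀ : ℝ, deriv Omega x₀ ≠ 0) :
    ¬ ConvexOn ℝ {V : ℝ × ℝ × ℝ × ℝ | 0 < V.1}
      (fun V : ℝ × ℝ × ℝ × ℝ =>
        V.2.1 ^ 2 / 2 + g / (2 * V.1) +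
          eta_p / (4 * lam) *
            (V.1 ^ 2 * Real.exp (-(Omega V.2.2.1)) +
              (V.1 ^ 2)⁻¹ * Real.exp (-(zeta V.2.2.2)) +
              Omega V.2.2.1 + zeta V.2.2.2 - 2)) := by
  intro hconv
  obtain ⟨x₀, hx₀⟩ := hOmega'
  have hconcave : ConcaveOn ℝ univ fun w => exp (Omega w) :=
    concaveOn_exp_of_convexOn_shallowEnergy (by positivity) hconv
  have hconst : Omega = fun _ => Omega x₀ := funext fun x =>
    exp_injective (hconcave.eq_of_bddBelow ⟨0, by rintro _ ⟨w, rfl⟩; exact (exp_pos _).le⟩ x x₀)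
  exact hx₀ (by rw [hconst, deriv_const])

/-- Non-convexity of the energy with respect to any conservative variables:
the Lagrangian energy written in the variables
`V = (1/h, u, ϖ⁻¹(σxx^{-1/2}/h), ς⁻¹(σzz^{1/2}/h))`, with `Ω = 2 log ϖ` and
`ζ = -2 log ς`, is never convex. -/
theorem energy_not_convex_conservative_variables
    (g eta_p lam : ℝ) (hg : 0 < g) (hetap : 0 < eta_p) (hlam : 0 < lam)
    (Omega zeta : ℝ → ℝ) (hOmega : ContDiff ℝ 2 Omega) (hzeta : ContDiff ℝ 2 zeta)
    (hOmega' : ∃ x₀ : ℝ, deriv Omega x₀ ≠ 0) :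
    ¬ ConvexOn ℝ {V : ℝ × ℝ × ℝ × ℝ | 0 < V.1}
      (fun V : ℝ × ℝ × ℝ × ℝ =>
        V.2.1 ^ 2 / 2 + g / (2 * V.1) +
          eta_p / (4 * lam) *
            (V.1 ^ 2 * Real.exp (-(Omega V.2.2.1)) +
              (V.1 ^ 2)⁻¹ * Real.exp (-(zeta V.2.2.2)) +
              Omega V.2.2.1 + zeta V.2.2.2 - 2)) :=
  energy_not_convex_conservative_variables_general g eta_p lam hetap hlam Omega zeta hOmega'
end

section
/- Properties of the Lagrangian sound speed: let g, eta_p, lambda > 0 and fix sxx > 0, szz > 0. For h > 0 set p(h) = g h + (eta_p/(2 lambda)) ( 3 (h·szz)² + (h·sxx)^{−2} ) and phi(h) = h · sqrt(p(h)). Then phi is differentiable on (0,∞) with phi'(h) = ( 3 g h + 6 (eta_p/lambda) (h·szz)² ) / ( 2 sqrt(p(h)) ); consequently 0 < phi'(h) ≤ 2 sqrt(p(h)) for all h > 0, and phi(h) → ∞ as h → ∞. -/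
/-! Writing `φ(h) = h √(p(h))`, the product rule gives `φ' = (2 p + h p') / (2 √p)`. In
`2 p + h p'` the `h⁻²` term of `p` cancels, because `h · (h⁻²)' = -2 h⁻²`, leaving
`3 g h + 12 c (h szz)²` with `c = η_p/(2λ)`. This is positive, and `4 p` exceeds it by
`g h + 2 c (h sxx)⁻² ≥ 0`, which is the bound `φ' ≤ 2 √p`. Finally `p ≥ g` for `h ≥ 1`, so
`φ(h) ≥ √g h`. -/

open Filter

theorem HasDerivAt.mul_sqrt {p : ℝ → ℝ} {p' x : ℝ} (hp : HasDerivAt p p' x) (hpx : 0 < p x) :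
    HasDerivAt (fun y => y * √(p y)) ((2 * p x + x * p') / (2 * √(p x))) x := by
  refine ((hasDerivAt_id x).mul ((Real.hasDerivAt_sqrt hpx.ne').comp x hp)).congr_deriv ?_
  have hss : √(p x) * √(p x) = p x := Real.mul_self_sqrt hpx.le
  have hs : √(p x) ≠ 0 := (Real.sqrt_pos.2 hpx).ne'
  simp only [Function.comp_apply, id_eq]
  field_simp
  linear_combination 2 * hss

theorem div_two_sqrt_le_two_sqrt {q p : ℝ} (hp : 0 < p) (hq : q ≤ 4 * p) :
    q / (2 * √p) ≤ 2 * √p := by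
  rw [div_le_iff₀ (by positivity)]
  calc q ≤ 4 * p := hq
    _ = 2 * √p * (2 * √p) := by rw [mul_mul_mul_comm, Real.mul_self_sqrt hp.le]; norm_num

theorem tendsto_mul_sqrt_atTop {p : ℝ → ℝ} {m : ℝ} (hm : 0 < m) (hp : ∀ᶠ x in atTop, m ≤ p x) :
    Tendsto (fun x => x * √(p x)) atTop atTop := by
  refine tendsto_atTop_mono' _ ?_ (tendsto_id.atTop_mul_const (Real.sqrt_pos.2 hm))
  filter_upwards [hp, eventually_ge_atTop 0] with x hmx hx
  exact mul_le_mul_of_nonneg_left (Real.sqrt_le_sqrt hmx) hx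

theorem hasDerivAt_inv_sq_mul_const (b : ℝ) {x : ℝ} (hx : x ≠ 0) :
    HasDerivAt (fun y => ((y * b) ^ 2)⁻¹) (-2 * ((x * b) ^ 2)⁻¹ / x) x := by
  -- splitting off `(b ^ 2)⁻¹` avoids assuming `b ≠ 0`
  have hfun : (fun y => ((y * b) ^ 2)⁻¹) = fun y => (b ^ 2)⁻¹ * (y ^ 2)⁻¹ := by
    funext y; rw [mul_pow, mul_inv, mul_comm]
  rw [hfun]
  refine (((hasDerivAt_pow 2 x).inv (pow_ne_zero 2 hx)).const_mul (b ^ 2)⁻¹).congr_deriv ?_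
  rw [mul_pow, mul_inv]
  field_simp
  ring

/-- `p(h)` with `c = η_p/(2λ)`, `a = szz`, `b = sxx`. -/
noncomputable def pressureSlope (g c a b x : ℝ) : ℝ :=
  g * x + c * (3 * (x * a) ^ 2 + ((x * b) ^ 2)⁻¹)

section pressureSlope

variable {g c a b x : ℝ}

theorem hasDerivAt_pressureSlope (hx : x ≠ 0) :
    HasDerivAt (pressureSlope g c a b)
      (g + c * (6 * a * (x * a) + -2 * ((x * b) ^ 2)⁻¹ / x)) x := by
  have hsq : HasDerivAt (fun y => 3 * (y * a) ^ 2) (6 * a * (x * a)) x := by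
    refine ((((hasDerivAt_id' x).mul_const a).pow 2).const_mul 3).congr_deriv ?_
    ring
  refine (((hasDerivAt_id' x).const_mul g).add
    ((hsq.add (hasDerivAt_inv_sq_mul_const b hx)).const_mul c)).congr_deriv ?_
  ring

theorem two_mul_pressureSlope_add_mul_deriv (hx : x ≠ 0) :
    2 * pressureSlope g c a b x + x * (g + c * (6 * a * (x * a) + -2 * ((x * b) ^ 2)⁻¹ / x)) =
      3 * g * x + 12 * c * (x * a) ^ 2 := by
  unfold pressureSlope
  field_simp
  ring

theorem pressureSlope_pos (hg : 0 < g) (hc : 0 ≤ c) (hx : 0 < x) :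
    0 < pressureSlope g c a b x := by
  unfold pressureSlope
  positivity

theorem le_pressureSlope (hg : 0 ≤ g) (hc : 0 ≤ c) (hx : 1 ≤ x) : g ≤ pressureSlope g c a b x := by
  unfold pressureSlope
  nlinarith [mul_nonneg hc (by positivity : 0 ≤ 3 * (x * a) ^ 2 + ((x * b) ^ 2)⁻¹)]

theorem three_mul_add_le_four_mul_pressureSlope (hg : 0 ≤ g) (hc : 0 ≤ c) (hx : 0 ≤ x) :
    3 * g * x + 12 * c * (x * a) ^ 2 ≤ 4 * pressureSlope g c a b x := by
  unfold pressureSlope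
  nlinarith [mul_nonneg hg hx, mul_nonneg hc (by positivity : 0 ≤ ((x * b) ^ 2)⁻¹)]

end pressureSlope

theorem lagrangian_sound_speed_properties_general
    (g eta_p lam sxx szz : ℝ) (hg : 0 < g) (hetap : 0 < eta_p) (hlam : 0 < lam) :
    (∀ h : ℝ, 0 < h →
      HasDerivAt
        (fun h : ℝ => h * Real.sqrt
          (g * h + eta_p / (2 * lam) * (3 * (h * szz) ^ 2 + ((h * sxx) ^ 2)⁻¹)))
        ((3 * g * h + 6 * (eta_p / lam) * (h * szz) ^ 2) /
          (2 * Real.sqrt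
            (g * h + eta_p / (2 * lam) * (3 * (h * szz) ^ 2 + ((h * sxx) ^ 2)⁻¹)))) h ∧
      0 < (3 * g * h + 6 * (eta_p / lam) * (h * szz) ^ 2) /
          (2 * Real.sqrt
            (g * h + eta_p / (2 * lam) * (3 * (h * szz) ^ 2 + ((h * sxx) ^ 2)⁻¹))) ∧
      (3 * g * h + 6 * (eta_p / lam) * (h * szz) ^ 2) /
          (2 * Real.sqrt
            (g * h + eta_p / (2 * lam) * (3 * (h * szz) ^ 2 + ((h * sxx) ^ 2)⁻¹)))
        ≤ 2 * Real.sqrt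
            (g * h + eta_p / (2 * lam) * (3 * (h * szz) ^ 2 + ((h * sxx) ^ 2)⁻¹))) ∧
    Filter.Tendsto
      (fun h : ℝ => h * Real.sqrt
        (g * h + eta_p / (2 * lam) * (3 * (h * szz) ^ 2 + ((h * sxx) ^ 2)⁻¹)))
      Filter.atTop Filter.atTop := by
  have hcoef : 6 * (eta_p / lam) = 12 * (eta_p / (2 * lam)) := by field_simp; ring
  have hc : 0 ≤ eta_p / (2 * lam) := by positivity
  rw [hcoef]
  refine ⟨fun h hh => ?_,
    tendsto_mul_sqrt_atTop hg ((eventually_ge_atTop 1).mono fun h => le_pressureSlope hg.le hc)⟩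
  have hp : 0 < pressureSlope g _ szz sxx h := pressureSlope_pos hg hc hh
  have hderiv := (hasDerivAt_pressureSlope hh.ne').mul_sqrt hp
  rw [two_mul_pressureSlope_add_mul_deriv hh.ne'] at hderiv
  exact ⟨hderiv, by positivity,
    div_two_sqrt_le_two_sqrt hp (three_mul_add_le_four_mul_pressureSlope hg.le hc hh.le)⟩

/-- Properties of the Lagrangian sound speed `φ(h) = h √(p(h))` where
`p(h) = g h + (η_p/(2λ)) (3 (h szz)² + (h sxx)⁻²)`. -/
theorem lagrangian_sound_speed_properties
    (g eta_p lam sxx szz : ℝ) (hg : 0 < g) (hetap : 0 < eta_p) (hlam : 0 < lam)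
    (hsxx : 0 < sxx) (hszz : 0 < szz) :
    (∀ h : ℝ, 0 < h →
      HasDerivAt
        (fun h : ℝ => h * Real.sqrt
          (g * h + eta_p / (2 * lam) * (3 * (h * szz) ^ 2 + ((h * sxx) ^ 2)⁻¹)))
        ((3 * g * h + 6 * (eta_p / lam) * (h * szz) ^ 2) /
          (2 * Real.sqrt
            (g * h + eta_p / (2 * lam) * (3 * (h * szz) ^ 2 + ((h * sxx) ^ 2)⁻¹)))) h ∧
      0 < (3 * g * h + 6 * (eta_p / lam) * (h * szz) ^ 2) /
          (2 * Real.sqrt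
            (g * h + eta_p / (2 * lam) * (3 * (h * szz) ^ 2 + ((h * sxx) ^ 2)⁻¹))) ∧
      (3 * g * h + 6 * (eta_p / lam) * (h * szz) ^ 2) /
          (2 * Real.sqrt
            (g * h + eta_p / (2 * lam) * (3 * (h * szz) ^ 2 + ((h * sxx) ^ 2)⁻¹)))
        ≤ 2 * Real.sqrt
            (g * h + eta_p / (2 * lam) * (3 * (h * szz) ^ 2 + ((h * sxx) ^ 2)⁻¹))) ∧
    Filter.Tendsto
      (fun h : ℝ => h * Real.sqrt
        (g * h + eta_p / (2 * lam) * (3 * (h * szz) ^ 2 + ((h * sxx) ^ 2)⁻¹)))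
      Filter.atTop Filter.atTop :=
  lagrangian_sound_speed_properties_general g eta_p lam sxx szz hg hetap hlam
end

section
/- Hyperbolicity and eigenvalues of the reduced model: let g, eta_p, lambda > 0, let h > 0, u ∈ ℝ, sigma_xx > 0, sigma_zz > 0 and p₃, p₄ ∈ ℝ, and set a² = g h + (eta_p/(2 lambda)) (3 sigma_zz + sigma_xx) with a = sqrt(a²) > 0. Then the 4×4 real matrix A with rows (u, h, 0, 0), (a²/h, u, p₃, p₄), (0, 0, u, 0), (0, 0, 0, u) has characteristic polynomial (X − u)² ( (X − u)² − a² ); in particular its eigenvalues are the real numbers u − a, u (with multiplicity two) and u + a, so A is diagonalizable over ℝ. -/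
/-!
In the `(h, u)` block the Jacobian is the acoustic system `!![u, h; c, u]` with `c = a² / h`,
whose eigenvalues are `u ± a`; the two conformation variables are only transported and give the
eigenvalue `u` twice. As `c ≠ 0`, their coupling `p₃, p₄` into the momentum equation is
absorbed by the eigenvectors `(-p₃ / c, 0, 1, 0)` and `(-p₄ / c, 0, 0, 1)`, which together
with `(h, ±a, 0, 0)` form a basis: its determinant is `-2 h a ≠ 0`.
-/

open Polynomial

def reducedJacobian {R : Type*} [Zero R] (u h c p q : R) : Matrix (Fin 4) (Fin 4) R :=
  !![u, h, 0, 0;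
     c, u, p, q;
     0, 0, u, 0;
     0, 0, 0, u]

theorem reducedJacobian_charpoly {R : Type*} [CommRing R] (u h c p q : R) :
    (reducedJacobian u h c p q).charpoly = (X - C u) ^ 2 * ((X - C u) ^ 2 - C (h * c)) := by
  rw [Matrix.charpoly, Matrix.det_succ_column_zero]
  simp [Fin.sum_univ_succ, Matrix.det_fin_three, Matrix.charmatrix_apply, reducedJacobian,
    Matrix.submatrix_apply, Fin.succAbove, Matrix.diagonal_apply]
  ring

theorem reducedJacobian_spectrum {K : Type*} [Field K] {u h c a : K} (p q : K)
    (ha : a ^ 2 = h * c) :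
    spectrum K (reducedJacobian u h c p q) = {u - a, u, u + a} := by
  ext x
  have hroot : (x - u) ^ 2 * ((x - u) ^ 2 - h * c) =
      (x - u) ^ 2 * ((x - (u - a)) * (x - (u + a))) := by
    rw [← ha]; ring
  simp only [Matrix.mem_spectrum_iff_isRoot_charpoly, reducedJacobian_charpoly, IsRoot.def,
    eval_mul, eval_pow, eval_sub, eval_X, eval_C, hroot, mul_eq_zero, pow_eq_zero_iff two_ne_zero,
    sub_eq_zero, Set.mem_insert_iff, Set.mem_singleton_iff]
  tauto

def reducedJacobianEigenbasis {K : Type*} [Field K] (h c a p q : K) : Matrix (Fin 4) (Fin 4) K :=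
  !![h, h, -(p / c), -(q / c);
     a, -a, 0, 0;
     0, 0, 1, 0;
     0, 0, 0, 1]

theorem reducedJacobianEigenbasis_det {K : Type*} [Field K] (h c a p q : K) :
    (reducedJacobianEigenbasis h c a p q).det = -(2 * h * a) := by
  rw [Matrix.det_succ_column_zero]
  simp [Fin.sum_univ_succ, Matrix.det_fin_three, reducedJacobianEigenbasis,
    Matrix.submatrix_apply, Fin.succAbove]
  ring

theorem reducedJacobian_mul_eigenbasis {K : Type*} [Field K] {u h c a : K} (p q : K)
    (ha : a ^ 2 = h * c) (hc : c ≠ 0) :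
    reducedJacobian u h c p q * reducedJacobianEigenbasis h c a p q =
      reducedJacobianEigenbasis h c a p q * Matrix.diagonal ![u + a, u - a, u, u] := by
  ext i j
  fin_cases i <;> fin_cases j <;>
    simp [reducedJacobian, reducedJacobianEigenbasis, Matrix.mul_apply, Fin.sum_univ_four,
      mul_div_cancel₀ _ hc] <;>
    first | ring1 | linear_combination -ha

theorem Matrix.isDiag_inv_mul_mul_of_mul_eq_mul_diagonal {n R : Type*} [Fintype n]
    [DecidableEq n] [CommRing R] {M P : Matrix n n R} (d : n → R) (hP : IsUnit P)
    (hMP : M * P = P * diagonal d) : (P⁻¹ * M * P).IsDiag := by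
  rw [Matrix.mul_assoc, hMP, ← Matrix.mul_assoc,
    nonsing_inv_mul _ ((isUnit_iff_isUnit_det P).mp hP), Matrix.one_mul]
  exact isDiag_diagonal d

theorem reducedJacobian_diagonalizable {K : Type*} [Field K] [NeZero (2 : K)] {u h c a : K}
    (p q : K) (ha : a ^ 2 = h * c) (hh : h ≠ 0) (ha0 : a ≠ 0) :
    ∃ P : Matrix (Fin 4) (Fin 4) K, IsUnit P ∧ (P⁻¹ * reducedJacobian u h c p q * P).IsDiag := by
  have hc : c ≠ 0 := by
    rintro rfl
    exact ha0 (by simpa using ha)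
  have hP : IsUnit (reducedJacobianEigenbasis h c a p q) := by
    rw [Matrix.isUnit_iff_isUnit_det, reducedJacobianEigenbasis_det, isUnit_iff_ne_zero,
      neg_ne_zero]
    exact mul_ne_zero (mul_ne_zero two_ne_zero hh) ha0
  exact ⟨_, hP, Matrix.isDiag_inv_mul_mul_of_mul_eq_mul_diagonal _ hP
    (reducedJacobian_mul_eigenbasis p q ha hc)⟩

/-- Hyperbolicity and eigenvalues of the reduced shallow viscoelastic model:
the Jacobian matrix in the variables `(h, u, sxx, szz)` has characteristic
polynomial `(X - u)² ((X - u)² - a²)`, eigenvalues `u - a`, `u` (double) and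
`u + a`, and is diagonalizable over `ℝ`. -/
theorem reduced_model_hyperbolic
    (g eta_p lam : ℝ) (hg : 0 < g) (hetap : 0 < eta_p) (hlam : 0 < lam)
    (h u sigma_xx sigma_zz p₃ p₄ : ℝ) (hh : 0 < h)
    (hsxx : 0 < sigma_xx) (hszz : 0 < sigma_zz)
    (asq a : ℝ)
    (hasq : asq = g * h + eta_p / (2 * lam) * (3 * sigma_zz + sigma_xx))
    (ha : a = Real.sqrt asq) :
    0 < a ∧
    (!![u, h, 0, 0;
        asq / h, u, p₃, p₄;
        0, 0, u, 0;
        0, 0, 0, u] : Matrix (Fin 4) (Fin 4) ℝ).charpoly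
      = (X - C u) ^ 2 * ((X - C u) ^ 2 - C asq) ∧
    spectrum ℝ
      (!![u, h, 0, 0;
          asq / h, u, p₃, p₄;
          0, 0, u, 0;
          0, 0, 0, u] : Matrix (Fin 4) (Fin 4) ℝ)
      = {u - a, u, u + a} ∧
    ∃ P : Matrix (Fin 4) (Fin 4) ℝ, IsUnit P ∧
      (P⁻¹ *
        (!![u, h, 0, 0;
            asq / h, u, p₃, p₄;
            0, 0, u, 0;
            0, 0, 0, u] : Matrix (Fin 4) (Fin 4) ℝ) * P).IsDiag := by
  have hasq_pos : 0 < asq := by rw [hasq]; positivity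
  have ha_pos : 0 < a := ha ▸ Real.sqrt_pos.mpr hasq_pos
  have hhc : h * (asq / h) = asq := mul_div_cancel₀ asq hh.ne'
  have ha_sq : a ^ 2 = h * (asq / h) := by rw [hhc, ha, Real.sq_sqrt hasq_pos.le]
  change 0 < a ∧ (reducedJacobian u h (asq / h) p₃ p₄).charpoly = _ ∧
    spectrum ℝ (reducedJacobian u h (asq / h) p₃ p₄) = _ ∧
    ∃ P, IsUnit P ∧ (P⁻¹ * reducedJacobian u h (asq / h) p₃ p₄ * P).IsDiag
  refine ⟨ha_pos, ?_, reducedJacobian_spectrum p₃ p₄ ha_sq,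
    reducedJacobian_diagonalizable p₃ p₄ ha_sq hh.ne' ha_pos.ne'⟩
  rw [reducedJacobian_charpoly, hhc]
end

section
/- Choice of relaxation speeds ensuring positivity and the subcharacteristic condition: let g, eta_p, lambda > 0. Let h_l, h_r > 0, u_l, u_r ∈ ℝ, and sigma_xx_l, sigma_zz_l, sigma_xx_r, sigma_zz_r > 0. Define P_l = g h_l²/2 + (eta_p/(2 lambda)) h_l (sigma_zz_l − sigma_xx_l) and P_r analogously; a_l = sqrt( g h_l + (eta_p/(2 lambda)) (3 sigma_zz_l + sigma_xx_l) ) and a_r analogously; c_l = h_l [ a_l + 2 ( max(0, u_l − u_r) + max(0, P_r − P_l)/(h_l a_l + h_r a_r) ) ] and c_r = h_r [ a_r + 2 ( max(0, u_l − u_r) + max(0, P_l − P_r)/(h_l a_l + h_r a_r) ) ]. Then: (i) 1/h_l + ( c_r (u_r − u_l) + P_l − P_r ) / ( c_l (c_l + c_r) ) > 0 and 1/h_r + ( c_l (u_r − u_l) + P_r − P_l ) / ( c_r (c_l + c_r) ) > 0, so the intermediate depths h_l* and h_r* defined as the reciprocals of these quantities are positive; (ii) for every h in the closed interval with endpoints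 h_l and h_l*, h² ( g h + (eta_p/(2 lambda)) ( 3 (h/h_l)² sigma_zz_l + (h_l/h)² sigma_xx_l ) ) ≤ c_l², and for every h in the closed interval with endpoints h_r and h_r*, h² ( g h + (eta_p/(2 lambda)) ( 3 (h/h_r)² sigma_zz_r + (h_r/h)² sigma_xx_r ) ) ≤ c_r². -/
/-!
Write `c = h₀ a + 2 h₀ (M + N)` with `M, N ≥ 0` the velocity and pressure corrections. They are
chosen so that the jump term in `1/h*` is at least `-(M + N)/c`, whence
`1/h* ≥ (1/h₀ + 1/y)/2` with `y = c/a`: the intermediate depth is positive and at most the harmonic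
mean of `h₀` and `y`. The Lagrangian wave speed `h² ∂ₕP` is increasing in `h` and equals
`(h₀ a)² ≤ c²` at `h₀`, which settles depths below `h₀`. Above `h₀` it is at most `(h²/h₀)² a²`,
and harmonic mean ≤ geometric mean gives `h² ≤ h₀ y`, i.e. `(h²/h₀) a ≤ c`.
-/

open Set

/-- `h² ∂ₕP` along the states sharing the Riemann invariants of `(h₀, σxx, σzz)`, where `k`
stands for `η_p / (2λ)`. -/
noncomputable def lagrangianWaveSpeedSq (g k h₀ σxx σzz h : ℝ) : ℝ :=
  h ^ 2 * (g * h + k * (3 * (h / h₀) ^ 2 * σzz + (h₀ / h) ^ 2 * σxx))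

section
variable {g k h₀ σxx σzz : ℝ}

lemma lagrangianWaveSpeedSq_eq {h : ℝ} (hh : h ≠ 0) :
    lagrangianWaveSpeedSq g k h₀ σxx σzz h =
      g * h ^ 3 + 3 * k * σzz * h ^ 4 / h₀ ^ 2 + k * σxx * h₀ ^ 2 := by
  have hσxx_term : (h₀ / h) ^ 2 * h ^ 2 = h₀ ^ 2 := by field_simp
  unfold lagrangianWaveSpeedSq
  linear_combination k * σxx * hσxx_term

lemma lagrangianWaveSpeedSq_self (hh₀ : h₀ ≠ 0) :
    lagrangianWaveSpeedSq g k h₀ σxx σzz h₀ = h₀ ^ 2 * (g * h₀ + k * (3 * σzz + σxx)) := by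
  unfold lagrangianWaveSpeedSq
  field_simp

lemma monotoneOn_lagrangianWaveSpeedSq (hg : 0 ≤ g) (hk : 0 ≤ k) (hσzz : 0 ≤ σzz) :
    MonotoneOn (lagrangianWaveSpeedSq g k h₀ σxx σzz) (Ioi 0) := by
  intro x hx y hy hxy
  rw [lagrangianWaveSpeedSq_eq hx.out.ne', lagrangianWaveSpeedSq_eq hy.out.ne']
  have hx₀ : 0 ≤ x := hx.out.le
  gcongr

lemma lagrangianWaveSpeedSq_le_of_le {h : ℝ} (hg : 0 ≤ g) (hk : 0 ≤ k) (hσxx : 0 ≤ σxx)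
    (hh₀ : 0 < h₀) (hle : h₀ ≤ h) :
    lagrangianWaveSpeedSq g k h₀ σxx σzz h ≤
      (h ^ 2 / h₀) ^ 2 * (g * h₀ + k * (3 * σzz + σxx)) := by
  have hh : 0 < h := hh₀.trans_le hle
  rw [lagrangianWaveSpeedSq_eq hh.ne', div_pow, ← sub_nonneg]
  have key : (h ^ 2) ^ 2 / h₀ ^ 2 * (g * h₀ + k * (3 * σzz + σxx)) -
      (g * h ^ 3 + 3 * k * σzz * h ^ 4 / h₀ ^ 2 + k * σxx * h₀ ^ 2) =
      (g * h ^ 3 * h₀ * (h - h₀) + k * σxx * (h ^ 4 - h₀ ^ 4)) / h₀ ^ 2 := by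
    field_simp; ring
  rw [key]
  have hpow : h₀ ^ 4 ≤ h ^ 4 := by gcongr
  exact div_nonneg (add_nonneg (mul_nonneg (by positivity) (sub_nonneg.2 hle))
    (mul_nonneg (by positivity) (sub_nonneg.2 hpow))) (by positivity)

end

lemma sq_le_mul_of_le_harm_mean {x y h : ℝ} (hx : 0 < x) (hy : 0 < y) (hh : 0 ≤ h)
    (hle : h ≤ 2 * x * y / (x + y)) : h ^ 2 ≤ x * y := calc
  h ^ 2 ≤ (2 * x * y / (x + y)) ^ 2 := pow_le_pow_left₀ hh hle 2
  _ ≤ x * y := by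
    rw [div_pow, div_le_iff₀ (by positivity)]
    nlinarith [sq_nonneg (x - y), mul_pos hx hy]

lemma le_inv_intermediate_depth {h a c₁ c₂ M N d P₁ P₂ : ℝ} (hh : 0 < h) (ha : 0 < a)
    (hM : 0 ≤ M) (hN : 0 ≤ N) (hc₂ : 0 < c₂) (hc₁ : c₁ = h * (a + 2 * (M + N)))
    (hd : -d ≤ M) (hP : P₂ - P₁ ≤ N * (c₁ + c₂)) :
    (c₁ + h * a) / (2 * h * c₁) ≤ 1 / h + (c₂ * d + P₁ - P₂) / (c₁ * (c₁ + c₂)) := by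
  have hc₁_pos : 0 < c₁ := by rw [hc₁]; positivity
  have hX : -((M + N) * (c₁ + c₂)) ≤ c₂ * d + P₁ - P₂ := by
    nlinarith [mul_nonneg hM hc₁_pos.le, mul_le_mul_of_nonneg_left hd hc₂.le]
  calc (c₁ + h * a) / (2 * h * c₁) = 1 / h - (M + N) / c₁ := by
        rw [hc₁]; field_simp; ring
    _ = 1 / h + -((M + N) * (c₁ + c₂)) / (c₁ * (c₁ + c₂)) := by
        field_simp; ring
    _ ≤ 1 / h + (c₂ * d + P₁ - P₂) / (c₁ * (c₁ + c₂)) := by gcongr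

lemma pos_and_lagrangianWaveSpeedSq_le {g k h₀ σxx σzz a c i : ℝ} (hg : 0 ≤ g) (hk : 0 ≤ k)
    (hσxx : 0 ≤ σxx) (hσzz : 0 ≤ σzz) (hh₀ : 0 < h₀) (ha : 0 < a)
    (ha_sq : a ^ 2 = g * h₀ + k * (3 * σzz + σxx)) (hc : h₀ * a ≤ c)
    (hi : (c + h₀ * a) / (2 * h₀ * c) ≤ i) :
    0 < i ∧ ∀ h ∈ uIcc h₀ i⁻¹, lagrangianWaveSpeedSq g k h₀ σxx σzz h ≤ c ^ 2 := by
  set y := c / a with hy_def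
  have hc_pos : 0 < c := (by positivity : 0 < h₀ * a).trans_le hc
  have hy : h₀ ≤ y := by rwa [le_div_iff₀ ha]
  have hy_pos : 0 < y := hh₀.trans_le hy
  have hc_eq : c = y * a := by rw [hy_def, div_mul_cancel₀ _ ha.ne']
  have hi' : (h₀ + y) / (2 * h₀ * y) ≤ i := by
    convert hi using 1
    rw [hc_eq]; field_simp; ring
  have hi_pos : 0 < i := lt_of_lt_of_le (by positivity) hi'
  have hinv : i⁻¹ ≤ 2 * h₀ * y / (h₀ + y) := by
    rw [← inv_div]; exact inv_anti₀ (by positivity) hi'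
  have hh₀_le : h₀ ≤ 2 * h₀ * y / (h₀ + y) := by
    rw [le_div_iff₀ (by positivity)]; nlinarith
  refine ⟨hi_pos, fun h hh => ?_⟩
  rcases le_total h h₀ with hle | hle
  · have hh_pos : 0 < h := (lt_min hh₀ (inv_pos.mpr hi_pos)).trans_le hh.1
    calc lagrangianWaveSpeedSq g k h₀ σxx σzz h ≤ lagrangianWaveSpeedSq g k h₀ σxx σzz h₀ :=
          monotoneOn_lagrangianWaveSpeedSq hg hk hσzz hh_pos hh₀ hle
      _ = (h₀ * a) ^ 2 := by rw [lagrangianWaveSpeedSq_self hh₀.ne', mul_pow, ha_sq]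
      _ ≤ c ^ 2 := by gcongr
  · have hh_le : h ≤ 2 * h₀ * y / (h₀ + y) := hh.2.trans (max_le hh₀_le hinv)
    have hgm : h ^ 2 ≤ h₀ * y := sq_le_mul_of_le_harm_mean hh₀ hy_pos (by linarith) hh_le
    calc lagrangianWaveSpeedSq g k h₀ σxx σzz h ≤ (h ^ 2 / h₀) ^ 2 * a ^ 2 :=
          ha_sq ▸ lagrangianWaveSpeedSq_le_of_le hg hk hσxx hh₀ hle
      _ ≤ y ^ 2 * a ^ 2 := by
          gcongr
          rwa [div_le_iff₀ hh₀, mul_comm]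
      _ = c ^ 2 := by rw [hc_eq, mul_pow]

lemma le_max_zero_div_mul {x D E : ℝ} (hD : 0 < D) (hDE : D ≤ E) : x ≤ max 0 x / D * E :=
  calc x ≤ max 0 x := le_max_right 0 x
    _ = max 0 x / D * D := (div_mul_cancel₀ _ hD.ne').symm
    _ ≤ max 0 x / D * E := by gcongr

theorem relaxation_speeds_subcharacteristic_general
    (g eta_p lam : ℝ) (hg : 0 < g) (hetap : 0 < eta_p) (hlam : 0 < lam)
    (h_l h_r u_l u_r sxx_l szz_l sxx_r szz_r : ℝ)
    (hhl : 0 < h_l) (hhr : 0 < h_r)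
    (hsxxl : 0 < sxx_l) (hszzl : 0 < szz_l) (hsxxr : 0 < sxx_r) (hszzr : 0 < szz_r)
    (P_l P_r a_l a_r c_l c_r i_l i_r : ℝ)
    (hal : a_l = Real.sqrt (g * h_l + eta_p / (2 * lam) * (3 * szz_l + sxx_l)))
    (har : a_r = Real.sqrt (g * h_r + eta_p / (2 * lam) * (3 * szz_r + sxx_r)))
    (hcl : c_l = h_l * (a_l + 2 * (max 0 (u_l - u_r) +
      max 0 (P_r - P_l) / (h_l * a_l + h_r * a_r))))
    (hcr : c_r = h_r * (a_r + 2 * (max 0 (u_l - u_r) +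
      max 0 (P_l - P_r) / (h_l * a_l + h_r * a_r))))
    (hil : i_l = 1 / h_l + (c_r * (u_r - u_l) + P_l - P_r) / (c_l * (c_l + c_r)))
    (hir : i_r = 1 / h_r + (c_l * (u_r - u_l) + P_r - P_l) / (c_r * (c_l + c_r))) :
    (0 < i_l ∧ 0 < i_r) ∧
    (∀ h ∈ Set.uIcc h_l i_l⁻¹,
      h ^ 2 * (g * h + eta_p / (2 * lam) *
        (3 * (h / h_l) ^ 2 * szz_l + (h_l / h) ^ 2 * sxx_l)) ≤ c_l ^ 2) ∧
    (∀ h ∈ Set.uIcc h_r i_r⁻¹,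
      h ^ 2 * (g * h + eta_p / (2 * lam) *
        (3 * (h / h_r) ^ 2 * szz_r + (h_r / h) ^ 2 * sxx_r)) ≤ c_r ^ 2) := by
  have hk : 0 < eta_p / (2 * lam) := by positivity
  have hrad_l : 0 < g * h_l + eta_p / (2 * lam) * (3 * szz_l + sxx_l) := by positivity
  have hrad_r : 0 < g * h_r + eta_p / (2 * lam) * (3 * szz_r + sxx_r) := by positivity
  have ha_l : 0 < a_l := hal ▸ Real.sqrt_pos.mpr hrad_l
  have ha_r : 0 < a_r := har ▸ Real.sqrt_pos.mpr hrad_r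
  have hD : 0 < h_l * a_l + h_r * a_r := by positivity
  have hM : 0 ≤ max 0 (u_l - u_r) := le_max_left _ _
  have hdu : -(u_r - u_l) ≤ max 0 (u_l - u_r) := by rw [neg_sub]; exact le_max_right _ _
  have hN_l : 0 ≤ max 0 (P_r - P_l) / (h_l * a_l + h_r * a_r) := by positivity
  have hN_r : 0 ≤ max 0 (P_l - P_r) / (h_l * a_l + h_r * a_r) := by positivity
  have hc_l : h_l * a_l ≤ c_l := by rw [hcl]; nlinarith
  have hc_r : h_r * a_r ≤ c_r := by rw [hcr]; nlinarith
  have hD_le : h_l * a_l + h_r * a_r ≤ c_l + c_r := by linarith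
  have hi_l : (c_l + h_l * a_l) / (2 * h_l * c_l) ≤ i_l := hil ▸
    le_inv_intermediate_depth hhl ha_l hM hN_l ((mul_pos hhr ha_r).trans_le hc_r) hcl hdu
      (le_max_zero_div_mul hD hD_le)
  have hi_r : (c_r + h_r * a_r) / (2 * h_r * c_r) ≤ i_r := by
    rw [hir, add_comm c_l]
    exact le_inv_intermediate_depth hhr ha_r hM hN_r ((mul_pos hhl ha_l).trans_le hc_l) hcr hdu
      (le_max_zero_div_mul hD (add_comm c_l c_r ▸ hD_le))
  obtain ⟨hil_pos, hsub_l⟩ := pos_and_lagrangianWaveSpeedSq_le hg.le hk.le hsxxl.le hszzl.le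
    hhl ha_l (hal ▸ Real.sq_sqrt hrad_l.le) hc_l hi_l
  obtain ⟨hir_pos, hsub_r⟩ := pos_and_lagrangianWaveSpeedSq_le hg.le hk.le hsxxr.le hszzr.le
    hhr ha_r (har ▸ Real.sq_sqrt hrad_r.le) hc_r hi_r
  exact ⟨⟨hil_pos, hir_pos⟩, hsub_l, hsub_r⟩

/-- Choice of relaxation speeds ensuring positivity of the intermediate depths
and the subcharacteristic condition. -/
theorem relaxation_speeds_subcharacteristic
    (g eta_p lam : ℝ) (hg : 0 < g) (hetap : 0 < eta_p) (hlam : 0 < lam)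
    (h_l h_r u_l u_r sxx_l szz_l sxx_r szz_r : ℝ)
    (hhl : 0 < h_l) (hhr : 0 < h_r)
    (hsxxl : 0 < sxx_l) (hszzl : 0 < szz_l) (hsxxr : 0 < sxx_r) (hszzr : 0 < szz_r)
    (P_l P_r a_l a_r c_l c_r i_l i_r : ℝ)
    (hPl : P_l = g * h_l ^ 2 / 2 + eta_p / (2 * lam) * h_l * (szz_l - sxx_l))
    (hPr : P_r = g * h_r ^ 2 / 2 + eta_p / (2 * lam) * h_r * (szz_r - sxx_r))
    (hal : a_l = Real.sqrt (g * h_l + eta_p / (2 * lam) * (3 * szz_l + sxx_l)))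
    (har : a_r = Real.sqrt (g * h_r + eta_p / (2 * lam) * (3 * szz_r + sxx_r)))
    (hcl : c_l = h_l * (a_l + 2 * (max 0 (u_l - u_r) +
      max 0 (P_r - P_l) / (h_l * a_l + h_r * a_r))))
    (hcr : c_r = h_r * (a_r + 2 * (max 0 (u_l - u_r) +
      max 0 (P_l - P_r) / (h_l * a_l + h_r * a_r))))
    (hil : i_l = 1 / h_l + (c_r * (u_r - u_l) + P_l - P_r) / (c_l * (c_l + c_r)))
    (hir : i_r = 1 / h_r + (c_l * (u_r - u_l) + P_r - P_l) / (c_r * (c_l + c_r))) :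
    (0 < i_l ∧ 0 < i_r) ∧
    (∀ h ∈ Set.uIcc h_l i_l⁻¹,
      h ^ 2 * (g * h + eta_p / (2 * lam) *
        (3 * (h / h_l) ^ 2 * szz_l + (h_l / h) ^ 2 * sxx_l)) ≤ c_l ^ 2) ∧
    (∀ h ∈ Set.uIcc h_r i_r⁻¹,
      h ^ 2 * (g * h + eta_p / (2 * lam) *
        (3 * (h / h_r) ^ 2 * szz_r + (h_r / h) ^ 2 * sxx_r)) ≤ c_r ^ 2) :=
  relaxation_speeds_subcharacteristic_general g eta_p lam hg hetap hlam h_l h_r u_l u_r sxx_l szz_l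
    sxx_r szz_r hhl hhr hsxxl hszzl hsxxr hszzr P_l P_r a_l a_r c_l c_r i_l i_r hal har hcl hcr hil
    hir
end

section
/- Uniform bound on the relaxation propagation speeds: there exists an absolute constant C > 0 such that for all g, eta_p, lambda > 0, all h_l, h_r > 0, u_l, u_r ∈ ℝ and sigma_xx_l, sigma_zz_l, sigma_xx_r, sigma_zz_r > 0, defining P_l = g h_l²/2 + (eta_p/(2 lambda)) h_l (sigma_zz_l − sigma_xx_l), P_r analogously, a_l = sqrt( g h_l + (eta_p/(2 lambda)) (3 sigma_zz_l + sigma_xx_l) ), a_r analogously, c_l = h_l [ a_l + 2 ( max(0, u_l − u_r) + max(0, P_r − P_l)/(h_l a_l + h_r a_r) ) ] and c_r = h_r [ a_r + 2 ( max(0, u_l − u_r) + max(0, P_l − P_r)/(h_l a_l + h_r a_r) ) ], one has max( c_l/h_l , c_r/h_r ) ≤ C ( |u_l| + |u_r| + a_l + a_r ). -/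
/-!
Both pressures are controlled by the sound speeds, `|P| ≤ h a²`, so the pressure jump in the
numerator of each correction term is at most `h_l a_l² + h_r a_r² ≤ (a_l + a_r)(h_l a_l + h_r a_r)`.
Each correction term is therefore at most `a_l + a_r`, and the velocity jump is at most
`|u_l| + |u_r|`, which gives the bound with `C = 3`.
-/

theorem abs_pressure_le {g k h sxx szz : ℝ} (hg : 0 ≤ g) (hk : 0 ≤ k) (hh : 0 ≤ h)
    (hsxx : 0 ≤ sxx) (hszz : 0 ≤ szz) :
    |g * h ^ 2 / 2 + k * h * (szz - sxx)| ≤ h * (g * h + k * (3 * szz + sxx)) := by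
  have hgh : 0 ≤ g * h ^ 2 := by positivity
  have hkx : 0 ≤ k * h * sxx := by positivity
  have hkz : 0 ≤ k * h * szz := by positivity
  rw [abs_le]
  constructor <;> linarith

theorem abs_pressure_le_mul_sq_sqrt {g k h sxx szz : ℝ} (hg : 0 ≤ g) (hk : 0 ≤ k) (hh : 0 ≤ h)
    (hsxx : 0 ≤ sxx) (hszz : 0 ≤ szz) :
    |g * h ^ 2 / 2 + k * h * (szz - sxx)| ≤ h * √(g * h + k * (3 * szz + sxx)) ^ 2 := by
  rw [Real.sq_sqrt (by positivity)]
  exact abs_pressure_le hg hk hh hsxx hszz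

theorem max_zero_div_le_add {x h₁ h₂ a₁ a₂ : ℝ} (hh₁ : 0 ≤ h₁) (hh₂ : 0 ≤ h₂)
    (ha₁ : 0 ≤ a₁) (ha₂ : 0 ≤ a₂) (hx : x ≤ h₁ * a₁ ^ 2 + h₂ * a₂ ^ 2) :
    max 0 x / (h₁ * a₁ + h₂ * a₂) ≤ a₁ + a₂ := by
  have hcross : h₁ * a₁ ^ 2 + h₂ * a₂ ^ 2 ≤ (a₁ + a₂) * (h₁ * a₁ + h₂ * a₂) := by
    have : 0 ≤ h₁ * a₁ * a₂ + h₂ * a₂ * a₁ := by positivity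
    nlinarith
  refine div_le_of_le_mul₀ (by positivity) (by positivity) (max_le (by positivity) ?_)
  exact hx.trans hcross

theorem max_zero_sub_le_abs_add_abs (x y : ℝ) : max 0 (x - y) ≤ |x| + |y| :=
  max_le (by positivity) (by linarith [le_abs_self x, neg_abs_le y])

/-- Uniform bound on the relaxation propagation speeds: there is an absolute
constant `C` such that `max (c_l/h_l) (c_r/h_r) ≤ C (|u_l| + |u_r| + a_l + a_r)`. -/
theorem relaxation_speeds_bound :
    ∃ C : ℝ, 0 < C ∧
      ∀ g eta_p lam h_l h_r u_l u_r sxx_l szz_l sxx_r szz_r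
        P_l P_r a_l a_r c_l c_r : ℝ,
        0 < g → 0 < eta_p → 0 < lam → 0 < h_l → 0 < h_r →
        0 < sxx_l → 0 < szz_l → 0 < sxx_r → 0 < szz_r →
        P_l = g * h_l ^ 2 / 2 + eta_p / (2 * lam) * h_l * (szz_l - sxx_l) →
        P_r = g * h_r ^ 2 / 2 + eta_p / (2 * lam) * h_r * (szz_r - sxx_r) →
        a_l = Real.sqrt (g * h_l + eta_p / (2 * lam) * (3 * szz_l + sxx_l)) →
        a_r = Real.sqrt (g * h_r + eta_p / (2 * lam) * (3 * szz_r + sxx_r)) →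
        c_l = h_l * (a_l + 2 * (max 0 (u_l - u_r) +
          max 0 (P_r - P_l) / (h_l * a_l + h_r * a_r))) →
        c_r = h_r * (a_r + 2 * (max 0 (u_l - u_r) +
          max 0 (P_l - P_r) / (h_l * a_l + h_r * a_r))) →
        max (c_l / h_l) (c_r / h_r) ≤ C * (|u_l| + |u_r| + a_l + a_r) := by
  refine ⟨3, by norm_num, ?_⟩
  intro g eta_p lam h_l h_r u_l u_r sxx_l szz_l sxx_r szz_r P_l P_r a_l a_r c_l c_r
    hg heta hlam hh_l hh_r hsxx_l hszz_l hsxx_r hszz_r hP_l hP_r ha_l ha_r hc_l hc_r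
  have hk : 0 ≤ eta_p / (2 * lam) := by positivity
  have hPa_l : |P_l| ≤ h_l * a_l ^ 2 := hP_l ▸ ha_l ▸
    abs_pressure_le_mul_sq_sqrt hg.le hk hh_l.le hsxx_l.le hszz_l.le
  have hPa_r : |P_r| ≤ h_r * a_r ^ 2 := hP_r ▸ ha_r ▸
    abs_pressure_le_mul_sq_sqrt hg.le hk hh_r.le hsxx_r.le hszz_r.le
  have ha_l0 : 0 ≤ a_l := ha_l ▸ Real.sqrt_nonneg _
  have ha_r0 : 0 ≤ a_r := ha_r ▸ Real.sqrt_nonneg _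
  obtain ⟨hPl_up, hPl_low⟩ := abs_le.mp hPa_l
  obtain ⟨hPr_up, hPr_low⟩ := abs_le.mp hPa_r
  have hjump_l := max_zero_div_le_add (x := P_r - P_l) hh_l.le hh_r.le ha_l0 ha_r0 (by linarith)
  have hjump_r := max_zero_div_le_add (x := P_l - P_r) hh_l.le hh_r.le ha_l0 ha_r0 (by linarith)
  have hu := max_zero_sub_le_abs_add_abs u_l u_r
  rw [hc_l, hc_r, mul_div_cancel_left₀ _ hh_l.ne', mul_div_cancel_left₀ _ hh_r.ne']
  apply max_le <;> linarith [abs_nonneg u_l, abs_nonneg u_r]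
end

section
/- Energy–flux identity in pseudo-conservative variables: let g, eta_p, lambda > 0. On the set { q ∈ ℝ⁴ : q₁ > 0, q₃ > 0, q₄ > 0 } write h = q₁, u = q₂/q₁, sigma_xx = q₃/q₁, sigma_zz = q₄/q₁, P = g h²/2 + (eta_p/(2 lambda)) h (sigma_zz − sigma_xx), E(q) = q₂²/(2q₁) + g q₁²/2 + (eta_p/(4 lambda)) ( q₃ + q₄ − q₁ log(q₃ q₄ / q₁²) − 2 q₁ ), F(q) = ( h u, h u² + P, h sigma_xx u, h sigma_zz u ) and G(q) = ( E(q) + P ) u. Then the gradient of E is ∇E(q) = ( −u²/2 + g h − (eta_p/(4 lambda)) log(sigma_xx sigma_zz), u, (eta_p/(4 lambda)) (1 − 1/sigma_xx), (eta_p/(4 lambda)) (1 − 1/sigma_zz) ), and the identity G(q) − ∇E(q) · F(q) = − g h² u / 2 holds at every such q. -/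
set_option maxHeartbeats 1000000


open scoped RealInnerProductSpace

private lemma hasFDerivAt_div {E : Type*} [NormedAddCommGroup E] [NormedSpace ℝ E]
    {f g : E → ℝ} {f' g' : E →L[ℝ] ℝ} {x : E} (hf : HasFDerivAt f f' x)
    (hg : HasFDerivAt g g' x) (h : g x ≠ 0) :
    HasFDerivAt (fun y => f y / g y)
      (f x • ((-((g x) ^ 2)⁻¹) • g') + (g x)⁻¹ • f') x := by
  have hinv : HasFDerivAt (fun y => (g y)⁻¹) ((-((g x) ^ 2)⁻¹) • g') x := by
    have := (hasDerivAt_inv h).comp_hasFDerivAt x hg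
    exact this
  have := hf.mul hinv
  convert this using 1
  · rfl
  · rfl
  funext y
  simp [div_eq_mul_inv]

private lemma hasFDerivAt_sq {E : Type*} [NormedAddCommGroup E] [NormedSpace ℝ E]
    {f : E → ℝ} {f' : E →L[ℝ] ℝ} {x : E} (h : HasFDerivAt f f' x) :
    HasFDerivAt (fun y => f y ^ 2) ((2 * f x) • f') x := by
  have h2 := h.mul h
  simp only [← pow_two] at h2
  convert h2 using 1
  · rfl
  · rfl
  · rfl
  rw [two_mul, add_smul]


/-- Energy–flux identity in the pseudo-conservative variables
`q = (h, hu, hσxx, hσzz)`: the gradient of the energy `E` is as stated and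
`G(q) - ∇E(q) · F(q) = - g h² u / 2`. -/
theorem energy_flux_identity
    (g eta_p lam : ℝ) (hg : 0 < g) (hetap : 0 < eta_p) (hlam : 0 < lam)
    (q : EuclideanSpace ℝ (Fin 4)) (hq1 : 0 < q 0) (hq3 : 0 < q 2) (hq4 : 0 < q 3) :
    HasGradientAt
      (fun q : EuclideanSpace ℝ (Fin 4) =>
        (q 1) ^ 2 / (2 * q 0) + g * (q 0) ^ 2 / 2 +
          eta_p / (4 * lam) *
            (q 2 + q 3 - q 0 * Real.log (q 2 * q 3 / (q 0) ^ 2) - 2 * q 0))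
      ((WithLp.equiv 2 (Fin 4 → ℝ)).symm
        ![-(q 1 / q 0) ^ 2 / 2 + g * q 0 -
            eta_p / (4 * lam) * Real.log ((q 2 / q 0) * (q 3 / q 0)),
          q 1 / q 0,
          eta_p / (4 * lam) * (1 - 1 / (q 2 / q 0)),
          eta_p / (4 * lam) * (1 - 1 / (q 3 / q 0))]) q ∧
    ((((q 1) ^ 2 / (2 * q 0) + g * (q 0) ^ 2 / 2 +
        eta_p / (4 * lam) *
          (q 2 + q 3 - q 0 * Real.log (q 2 * q 3 / (q 0) ^ 2) - 2 * q 0)) +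
      (g * (q 0) ^ 2 / 2 + eta_p / (2 * lam) * q 0 * (q 3 / q 0 - q 2 / q 0))) *
        (q 1 / q 0)) -
      ⟪((WithLp.equiv 2 (Fin 4 → ℝ)).symm
          ![-(q 1 / q 0) ^ 2 / 2 + g * q 0 -
              eta_p / (4 * lam) * Real.log ((q 2 / q 0) * (q 3 / q 0)),
            q 1 / q 0,
            eta_p / (4 * lam) * (1 - 1 / (q 2 / q 0)),
            eta_p / (4 * lam) * (1 - 1 / (q 3 / q 0))]),
        ((WithLp.equiv 2 (Fin 4 → ℝ)).symm
          ![q 0 * (q 1 / q 0),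
            q 0 * (q 1 / q 0) ^ 2 +
              (g * (q 0) ^ 2 / 2 + eta_p / (2 * lam) * q 0 * (q 3 / q 0 - q 2 / q 0)),
            q 0 * (q 2 / q 0) * (q 1 / q 0),
            q 0 * (q 3 / q 0) * (q 1 / q 0)])⟫
      = - (g * (q 0) ^ 2 * (q 1 / q 0) / 2) := by
  refine ⟨?_, ?_⟩
  · have hq0 : q 0 ≠ 0 := hq1.ne'
    have hq2 : q 2 ≠ 0 := hq3.ne'
    have hq3' : q 3 ≠ 0 := hq4.ne'
    have h0 : HasFDerivAt (fun q : EuclideanSpace ℝ (Fin 4) => q 0)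
        (EuclideanSpace.proj (0 : Fin 4) : EuclideanSpace ℝ (Fin 4) →L[ℝ] ℝ) q := by
      have := (EuclideanSpace.proj (𝕜 := ℝ) (0 : Fin 4)).hasFDerivAt (x := q)
      rwa [show ⇑(EuclideanSpace.proj (0 : Fin 4)) = (fun q : EuclideanSpace ℝ (Fin 4) => q 0) from rfl] at this
    have h1 : HasFDerivAt (fun q : EuclideanSpace ℝ (Fin 4) => q 1)
        (EuclideanSpace.proj (1 : Fin 4) : EuclideanSpace ℝ (Fin 4) →L[ℝ] ℝ) q := by
      have := (EuclideanSpace.proj (𝕜 := ℝ) (1 : Fin 4)).hasFDerivAt (x := q)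
      rwa [show ⇑(EuclideanSpace.proj (1 : Fin 4)) = (fun q : EuclideanSpace ℝ (Fin 4) => q 1) from rfl] at this
    have h2 : HasFDerivAt (fun q : EuclideanSpace ℝ (Fin 4) => q 2)
        (EuclideanSpace.proj (2 : Fin 4) : EuclideanSpace ℝ (Fin 4) →L[ℝ] ℝ) q := by
      have := (EuclideanSpace.proj (𝕜 := ℝ) (2 : Fin 4)).hasFDerivAt (x := q)
      rwa [show ⇑(EuclideanSpace.proj (2 : Fin 4)) = (fun q : EuclideanSpace ℝ (Fin 4) => q 2) from rfl] at this
    have h3 : HasFDerivAt (fun q : EuclideanSpace ℝ (Fin 4) => q 3)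
        (EuclideanSpace.proj (3 : Fin 4) : EuclideanSpace ℝ (Fin 4) →L[ℝ] ℝ) q := by
      have := (EuclideanSpace.proj (𝕜 := ℝ) (3 : Fin 4)).hasFDerivAt (x := q)
      rwa [show ⇑(EuclideanSpace.proj (3 : Fin 4)) = (fun q : EuclideanSpace ℝ (Fin 4) => q 3) from rfl] at this
    have hA := hasFDerivAt_div (hasFDerivAt_sq h1) (h0.const_mul 2) (by simpa using hq0)
    have hB := hasFDerivAt_div ((hasFDerivAt_sq h0).const_mul g) (hasFDerivAt_const (2:ℝ) q) two_ne_zero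
    have hin := hasFDerivAt_div (h2.mul h3) (hasFDerivAt_sq h0) (by positivity)
    have hlog := hin.log (div_ne_zero (mul_ne_zero hq2 hq3') (pow_ne_zero 2 hq0))
    have hC := ((((h2.add h3).sub (h0.mul hlog)).sub (h0.const_mul 2)).const_mul (eta_p / (4 * lam)))
    have hD := (hA.add hB).add hC
    rw [hasGradientAt_iff_hasFDerivAt]
    convert hD using 1
    · rfl
    · rfl
    · rfl
    refine ContinuousLinearMap.ext fun y => ?_
    simp only [InnerProductSpace.toDual_apply_apply, PiLp.inner_apply, RCLike.inner_apply, starRingEnd_apply,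
      star_trivial, ContinuousLinearMap.add_apply, ContinuousLinearMap.sub_apply,
      ContinuousLinearMap.smul_apply, ContinuousLinearMap.coe_smul', Pi.smul_apply,
      PiLp.proj_apply, Pi.mul_apply, smul_eq_mul, Fin.sum_univ_four, WithLp.equiv_symm_apply, PiLp.toLp_apply,
      Matrix.cons_val_zero, Matrix.cons_val_one, Matrix.head_cons, Matrix.cons_val_two,
      Matrix.tail_cons, Matrix.cons_val_three]
    rw [show q 2 / q 0 * (q 3 / q 0) = q 2 * q 3 / (q 0) ^ 2 by
      rw [div_mul_div_comm]; ring_nf]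
    simp only [ContinuousLinearMap.zero_apply, smul_eq_mul, mul_zero, zero_mul, add_zero, zero_add]
    field_simp
    ring
  · have hq0 : q 0 ≠ 0 := hq1.ne'
    have hq2 : q 2 ≠ 0 := hq3.ne'
    have hq3' : q 3 ≠ 0 := hq4.ne'
    have hlamne : lam ≠ 0 := hlam.ne'
    rw [show q 2 / q 0 * (q 3 / q 0) = q 2 * q 3 / (q 0) ^ 2 by rw [div_mul_div_comm]; ring_nf]
    simp only [PiLp.inner_apply, RCLike.inner_apply, starRingEnd_apply, star_trivial,
      Fin.sum_univ_four, WithLp.equiv_symm_apply, PiLp.toLp_apply, Matrix.cons_val_zero, Matrix.cons_val_one,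
      Matrix.head_cons, Matrix.cons_val_two, Matrix.tail_cons, Matrix.cons_val_three]
    field_simp
    ring
end

section
/- Hydrostatic reconstruction at rest: let h_l, h_r ≥ 0 and b_l, b_r ∈ ℝ, set Δb = b_r − b_l, h_l♯ = max( h_l − max(Δb, 0), 0 ) and h_r♯ = max( h_r − max(−Δb, 0), 0 ). If h_l + b_l = h_r + b_r, then h_l♯ = h_r♯ = min(h_l, h_r). -/
/-! At rest the bottom jump is `Δb = h_l - h_r`, and `a - max (a - b) 0 = min a b`: lowering each
depth by the positive part of the jump towards the other side leaves exactly `min h_l h_r`, which is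
already nonnegative, so the outer truncation does nothing. -/

theorem sub_max_sub_zero {α : Type*} [AddCommGroup α] [LinearOrder α] [IsOrderedAddMonoid α]
    (a b : α) : a - max (a - b) 0 = min a b := by
  rw [← min_sub_sub_left, sub_sub_cancel, sub_zero, min_comm]

/-- Hydrostatic reconstruction at rest: for data at rest (`h_l + b_l = h_r + b_r`)
the two reconstructed depths coincide and equal `min h_l h_r`. -/
theorem hydrostatic_reconstruction_at_rest
    (h_l h_r b_l b_r : ℝ) (hhl : 0 ≤ h_l) (hhr : 0 ≤ h_r)
    (hrest : h_l + b_l = h_r + b_r) :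
    max (h_l - max (b_r - b_l) 0) 0 = min h_l h_r ∧
    max (h_r - max (-(b_r - b_l)) 0) 0 = min h_l h_r := by
  have hΔb : b_r - b_l = h_l - h_r := by linarith
  rw [hΔb, neg_sub, sub_max_sub_zero, sub_max_sub_zero, min_comm h_r,
    max_eq_left (le_min hhl hhr)]
  exact ⟨rfl, rfl⟩
end

section
/- Positivity of the conformation variables along characteristics: let lambda > 0, let a : ℝ → ℝ be continuous, and let sigma : [0, ∞) → ℝ be differentiable with sigma'(t) = a(t) sigma(t) + (1 − sigma(t))/lambda for all t ≥ 0 and sigma(0) > 0. Then sigma(t) > 0 for all t ≥ 0. -/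
/-!
Wherever `σ` vanishes the equation gives `σ' = 1/λ > 0`, so `σ` can only cross zero upwards.
The fencing theorem for right derivatives then keeps `σ ≥ 0`, and a later zero would be an
interior minimum, where the derivative would have to vanish.
-/

open Set

section

variable {f f' : ℝ → ℝ} {a : ℝ}

theorem nonneg_of_deriv_pos_where_zero
    (hf : ∀ x ∈ Ici a, HasDerivWithinAt f (f' x) (Ici a) x) (ha : 0 ≤ f a)
    (hzero : ∀ x ∈ Ici a, f x = 0 → 0 < f' x) : ∀ x ∈ Ici a, 0 ≤ f x := by
  intro x hx
  have hcont : ContinuousOn f (Icc a x) := fun y hy =>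
    (hf y hy.1).continuousWithinAt.mono Icc_subset_Ici_self
  exact image_le_of_deriv_right_lt_deriv_boundary' (f' := fun _ => 0) continuousOn_const
    (fun y _ => hasDerivWithinAt_const y _ 0) ha hcont
    (fun y hy => (hf y hy.1).mono (Ici_subset_Ici.2 hy.1))
    (fun y hy hy0 => hzero y hy.1 hy0.symm) ⟨hx, le_rfl⟩

theorem pos_of_deriv_pos_where_zero
    (hf : ∀ x ∈ Ici a, HasDerivWithinAt f (f' x) (Ici a) x) (ha : 0 < f a)
    (hzero : ∀ x ∈ Ici a, f x = 0 → 0 < f' x) : ∀ x ∈ Ici a, 0 < f x := by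
  have hnonneg := nonneg_of_deriv_pos_where_zero hf ha.le hzero
  intro x hx
  rcases (mem_Ici.1 hx).eq_or_lt with rfl | hax
  · exact ha
  by_contra! hneg
  have hx0 : f x = 0 := le_antisymm hneg (hnonneg x hx)
  have hmin : IsLocalMin f x := by
    filter_upwards [Ici_mem_nhds hax] with y hy
    rw [hx0]
    exact hnonneg y hy
  exact (hzero x hx hx0).ne' (hmin.hasDerivAt_eq_zero ((hf x hx).hasDerivAt (Ici_mem_nhds hax)))

end

theorem conformation_positive_along_characteristics_general
    (lam : ℝ) (hlam : 0 < lam)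
    (a : ℝ → ℝ)
    (sigma : ℝ → ℝ)
    (hderiv : ∀ t : ℝ, 0 ≤ t →
      HasDerivWithinAt sigma (a t * sigma t + (1 - sigma t) / lam) (Set.Ici 0) t)
    (h0 : 0 < sigma 0) :
    ∀ t : ℝ, 0 ≤ t → 0 < sigma t := fun t ht =>
  pos_of_deriv_pos_where_zero hderiv h0 (fun s _ hs => by simp [hs, hlam]) t ht

/-- Positivity of the conformation variables along characteristics: a solution of
`σ' = a(t) σ + (1 - σ)/λ` on `[0, ∞)` with positive initial data stays positive. -/
theorem conformation_positive_along_characteristics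
    (lam : ℝ) (hlam : 0 < lam)
    (a : ℝ → ℝ) (ha : Continuous a)
    (sigma : ℝ → ℝ)
    (hderiv : ∀ t : ℝ, 0 ≤ t →
      HasDerivWithinAt sigma (a t * sigma t + (1 - sigma t) / lam) (Set.Ici 0) t)
    (h0 : 0 < sigma 0) :
    ∀ t : ℝ, 0 ≤ t → 0 < sigma t :=
  conformation_positive_along_characteristics_general lam hlam a sigma hderiv h0
end

section
/- Convexity of entropies in s_zz: let phi : (0, ∞) → ℝ be twice continuously differentiable with 0 ≤ −phi'(s) ≤ 3 s·phi''(s) for all s > 0. Then the function (q₁, q₄) ↦ q₁ · phi( q₄^{1/2} · q₁^{−3/2} ) is convex on (0, ∞) × (0, ∞). -/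
/-!
On the segment from `(x, y)` to `(x + u, y + v)` put `X = x + t u`, `Y = y + t v` and
`S = Y^{1/2} X^{-3/2}`. With the logarithmic slopes `a = u / X`, `b = v / Y` one has `S' = ρ S`,
`ρ = b/2 - 3a/2`, `ρ' = 3a²/2 - b²/2`, and the second derivative of `X φ(S)` comes out as
`X S / 3 · ((3 S φ''(S) + φ'(S)) ρ² + (-φ'(S)) b²)`:
the two hypotheses on `φ` are exactly the signs of the two coefficients.
-/

open Set

theorem convexOn_of_convexOn_segments {𝕜 E β : Type*} [Field 𝕜] [LinearOrder 𝕜]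
    [IsStrictOrderedRing 𝕜] [AddCommGroup E] [Module 𝕜 E] [AddCommMonoid β] [PartialOrder β]
    [Module 𝕜 β] {s : Set E} (hs : Convex 𝕜 s) {f : E → β}
    (h : ∀ x ∈ s, ∀ y ∈ s, ConvexOn 𝕜 (Icc 0 1) fun t : 𝕜 => f (x + t • (y - x))) :
    ConvexOn 𝕜 s f := by
  refine ⟨hs, fun x hx y hy a b ha hb hab => ?_⟩
  have hpt : x + b • (y - x) = a • x + b • y := by
    rw [eq_sub_of_add_eq hab, smul_sub, sub_smul, one_smul]
    abel
  simpa [hpt] using (h x hx y hy).2 (left_mem_Icc.2 zero_le_one) (right_mem_Icc.2 zero_le_one)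
    ha hb hab

theorem hasDerivAt_const_add_mul (x u t : ℝ) : HasDerivAt (fun t => x + t * u) u t := by
  simpa using ((hasDerivAt_id t).mul_const u).const_add x

section ChainRule

variable {φ φ' φ'' S ρ : ℝ → ℝ} {x u t ρ' : ℝ}

theorem hasDerivAt_line_mul_comp (hφ : HasDerivAt φ (φ' (S t)) (S t))
    (hS : HasDerivAt S (ρ t * S t) t) :
    HasDerivAt (fun t => (x + t * u) * φ (S t))
      (u * φ (S t) + (x + t * u) * (φ' (S t) * (ρ t * S t))) t :=
  (hasDerivAt_const_add_mul x u t).mul (hφ.comp t hS)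

theorem hasDerivAt_deriv_line_mul_comp (hφ : HasDerivAt φ (φ' (S t)) (S t))
    (hφ' : HasDerivAt φ' (φ'' (S t)) (S t)) (hS : HasDerivAt S (ρ t * S t) t)
    (hρ : HasDerivAt ρ ρ' t) :
    HasDerivAt (fun t => u * φ (S t) + (x + t * u) * (φ' (S t) * (ρ t * S t)))
      (2 * u * φ' (S t) * (ρ t * S t)
        + (x + t * u) * (φ'' (S t) * (ρ t * S t) ^ 2 + φ' (S t) * ((ρ' + ρ t ^ 2) * S t))) t := by
  refine (((hφ.comp t hS).const_mul u).add ((hasDerivAt_const_add_mul x u t).mul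
    ((hφ'.comp t hS).mul (hρ.mul hS)))).congr_deriv ?_
  simp only [Function.comp_def, Pi.mul_apply]
  ring

end ChainRule

section Line

variable {x y u v t : ℝ}

theorem hasDerivAt_rpow_mul_rpow_line (β γ : ℝ) (hx : 0 < x + t * u) (hy : 0 < y + t * v) :
    HasDerivAt (fun t => (y + t * v) ^ β * (x + t * u) ^ γ)
      ((β * (v / (y + t * v)) + γ * (u / (x + t * u))) * ((y + t * v) ^ β * (x + t * u) ^ γ))
      t := by
  refine (((hasDerivAt_const_add_mul y v t).rpow_const (p := β) (Or.inl hy.ne')).mul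
    ((hasDerivAt_const_add_mul x u t).rpow_const (p := γ) (Or.inl hx.ne'))).congr_deriv ?_
  rw [Real.rpow_sub_one hy.ne', Real.rpow_sub_one hx.ne']
  ring

theorem hasDerivAt_logDeriv_line (β γ : ℝ) (hx : 0 < x + t * u) (hy : 0 < y + t * v) :
    HasDerivAt (fun t => β * (v / (y + t * v)) + γ * (u / (x + t * u)))
      (-(β * (v / (y + t * v)) ^ 2 + γ * (u / (x + t * u)) ^ 2)) t := by
  have hY := (hasDerivAt_const t v).div (hasDerivAt_const_add_mul y v t) hy.ne'
  have hX := (hasDerivAt_const t u).div (hasDerivAt_const_add_mul x u t) hx.ne'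
  refine ((hY.const_mul β).add (hX.const_mul γ)).congr_deriv ?_
  rw [div_pow, div_pow]
  ring

end Line

theorem entropy_deriv2_nonneg {X S a b ρ d₁ d₂ : ℝ} (hX : 0 ≤ X) (hS : 0 ≤ S)
    (hd₁ : 0 ≤ -d₁) (hd₂ : -d₁ ≤ 3 * S * d₂) (hρ : ρ = 1 / 2 * b + -(3 / 2) * a) :
    0 ≤ 2 * (X * a) * d₁ * (ρ * S)
      + X * (d₂ * (ρ * S) ^ 2 + d₁ * ((-(1 / 2 * b ^ 2 + -(3 / 2) * a ^ 2) + ρ ^ 2) * S)) := by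
  have key : 2 * (X * a) * d₁ * (ρ * S)
      + X * (d₂ * (ρ * S) ^ 2 + d₁ * ((-(1 / 2 * b ^ 2 + -(3 / 2) * a ^ 2) + ρ ^ 2) * S))
      = X * S / 3 * ((3 * S * d₂ + d₁) * ρ ^ 2 + -d₁ * b ^ 2) := by
    subst hρ; ring
  have hcoeff : 0 ≤ 3 * S * d₂ + d₁ := by linarith
  rw [key]
  positivity

theorem convexOn_Icc_entropy_line {φ φ' φ'' : ℝ → ℝ}
    (hφ : ∀ s, 0 < s → HasDerivAt φ (φ' s) s) (hφ' : ∀ s, 0 < s → HasDerivAt φ' (φ'' s) s)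
    (hcond : ∀ s, 0 < s → 0 ≤ -φ' s ∧ -φ' s ≤ 3 * s * φ'' s)
    {x y u v : ℝ} (hx₀ : 0 < x) (hx₁ : 0 < x + u) (hy₀ : 0 < y) (hy₁ : 0 < y + v) :
    ConvexOn ℝ (Icc 0 1)
      fun t => (x + t * u) * φ ((y + t * v) ^ (1 / 2 : ℝ) * (x + t * u) ^ (-(3 / 2) : ℝ)) := by
  set S := fun t => (y + t * v) ^ (1 / 2 : ℝ) * (x + t * u) ^ (-(3 / 2) : ℝ)
  set ρ := fun t => 1 / 2 * (v / (y + t * v)) + -(3 / 2) * (u / (x + t * u))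
  have hpos : ∀ t ∈ Icc (0 : ℝ) 1, 0 < x + t * u ∧ 0 < y + t * v := fun t ht =>
    ⟨by simpa using (convex_Ioi (0 : ℝ)).add_smul_sub_mem (y := x + u) hx₀ hx₁ ht,
      by simpa using (convex_Ioi (0 : ℝ)).add_smul_sub_mem (y := y + v) hy₀ hy₁ ht⟩
  have hSpos : ∀ t ∈ Icc (0 : ℝ) 1, 0 < S t := fun t ht =>
    mul_pos (Real.rpow_pos_of_pos (hpos t ht).2 _) (Real.rpow_pos_of_pos (hpos t ht).1 _)
  have hS : ∀ t ∈ Icc (0 : ℝ) 1, HasDerivAt S (ρ t * S t) t := fun t ht =>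
    hasDerivAt_rpow_mul_rpow_line _ _ (hpos t ht).1 (hpos t ht).2
  have hρ : ∀ t ∈ Icc (0 : ℝ) 1, HasDerivAt ρ _ t := fun t ht =>
    hasDerivAt_logDeriv_line _ _ (hpos t ht).1 (hpos t ht).2
  have hInt : interior (Icc (0 : ℝ) 1) ⊆ Icc 0 1 := interior_subset
  refine convexOn_of_hasDerivWithinAt2_nonneg (convex_Icc 0 1)
    (fun t ht => (hasDerivAt_line_mul_comp (hφ _ (hSpos t ht)) (hS t ht)).continuousAt
      |>.continuousWithinAt)
    (fun t ht => (hasDerivAt_line_mul_comp (hφ _ (hSpos t (hInt ht))) (hS t (hInt ht)))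
      |>.hasDerivWithinAt)
    (fun t ht => (hasDerivAt_deriv_line_mul_comp (hφ _ (hSpos t (hInt ht)))
      (hφ' _ (hSpos t (hInt ht))) (hS t (hInt ht)) (hρ t (hInt ht))).hasDerivWithinAt)
    (fun t ht => ?_)
  obtain ⟨hd₁, hd₂⟩ := hcond _ (hSpos t (hInt ht))
  have hX := (hpos t (hInt ht)).1
  have h := entropy_deriv2_nonneg hX.le (hSpos t (hInt ht)).le hd₁ hd₂ (a := u / (x + t * u))
    (b := v / (y + t * v)) rfl
  rwa [mul_div_cancel₀ u hX.ne'] at h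

/-- Convexity of entropies in `s_zz`: if `0 ≤ -φ' ≤ 3 s φ''` on `(0, ∞)` then
`(q₁, q₄) ↦ q₁ φ(q₄^{1/2} q₁^{-3/2})` is convex on `(0, ∞) × (0, ∞)`. -/
theorem entropy_szz_convex
    (phi : ℝ → ℝ) (hphi : ContDiffOn ℝ 2 phi (Set.Ioi 0))
    (hcond : ∀ s : ℝ, 0 < s →
      0 ≤ -deriv phi s ∧ -deriv phi s ≤ 3 * s * deriv (deriv phi) s) :
    ConvexOn ℝ (Set.Ioi (0 : ℝ) ×ˢ Set.Ioi (0 : ℝ))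
      (fun p : ℝ × ℝ => p.1 * phi (p.2 ^ ((1 / 2) : ℝ) * p.1 ^ (-(3 / 2) : ℝ))) := by
  have hφ : ∀ s, 0 < s → HasDerivAt phi (deriv phi s) s := fun s hs =>
    ((hphi.differentiableOn (by norm_num)).differentiableAt (Ioi_mem_nhds hs)).hasDerivAt
  have hφ' : ∀ s, 0 < s → HasDerivAt (deriv phi) (deriv (deriv phi) s) s := by
    have h := (hphi.deriv_of_isOpen (m := 1) isOpen_Ioi (by norm_num)).differentiableOn one_ne_zero
    exact fun s hs => (h.differentiableAt (Ioi_mem_nhds hs)).hasDerivAt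
  refine convexOn_of_convexOn_segments ((convex_Ioi 0).prod (convex_Ioi 0)) fun p hp q hq => ?_
  simp only [Prod.fst_add, Prod.snd_add, Prod.smul_fst, Prod.smul_snd, Prod.fst_sub,
    Prod.snd_sub, smul_eq_mul]
  exact convexOn_Icc_entropy_line hφ hφ' hcond hp.1 (by simpa using hq.1) hp.2
    (by simpa using hq.2)
end

section
/- Free-energy dissipation identity along the flow: let eta_p, lambda > 0, let u, sigma : ℝ × ℝ → ℝ be continuously differentiable with sigma > 0 everywhere, and suppose ∂t sigma + u ∂x sigma = 2 (∂x u) sigma + (1 − sigma)/lambda pointwise. Define tau = (eta_p/(2 lambda)) (sigma − 1). Then pointwise ∂t ( tau/2 − (eta_p/(4 lambda)) log sigma ) + u ∂x ( tau/2 − (eta_p/(4 lambda)) log sigma ) = (∂x u) tau − tau² / (eta_p sigma). -/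
/-! The free energy is a function `F ∘ σ` of the conformation alone, so the chain rule turns its
material derivative into `F'(σ)` times the material derivative of `σ`, which the transport equation
replaces by `2 (∂ₓu) σ + (1 - σ)/λ`. Since `F'(σ) = (η_p/(4λ))(1 - 1/σ)`, the stretching term
yields `(∂ₓu) τ` and the relaxation term `-τ²/(η_p σ)`. -/

open Real

theorem material_deriv_comp {φ : ℝ → ℝ} {f : ℝ × ℝ → ℝ} {t x v φ' : ℝ}
    (hφ : HasDerivAt φ φ' (f (t, x))) (hf : DifferentiableAt ℝ f (t, x)) :
    deriv (fun s => φ (f (s, x))) t + v * deriv (fun y => φ (f (t, y))) x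
      = φ' * (deriv (fun s => f (s, x)) t + v * deriv (fun y => f (t, y)) x) := by
  have hft : HasDerivAt (fun s => f (s, x)) (deriv (fun s => f (s, x)) t) t :=
    (hf.comp t (differentiableAt_id.prodMk (differentiableAt_const x))).hasDerivAt
  have hfx : HasDerivAt (fun y => f (t, y)) (deriv (fun y => f (t, y)) x) x :=
    (hf.comp x ((differentiableAt_const t).prodMk differentiableAt_id)).hasDerivAt
  have hφt : HasDerivAt (fun s => φ (f (s, x))) _ t := hφ.comp t hft
  have hφx : HasDerivAt (fun y => φ (f (t, y))) _ x := hφ.comp x hfx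
  rw [hφt.deriv, hφx.deriv]
  ring

noncomputable def freeEnergy (eta_p lam σ : ℝ) : ℝ :=
  eta_p / (2 * lam) * (σ - 1) / 2 - eta_p / (4 * lam) * log σ

theorem hasDerivAt_freeEnergy (eta_p lam : ℝ) {σ : ℝ} (hσ : σ ≠ 0) :
    HasDerivAt (freeEnergy eta_p lam) (eta_p / (4 * lam) * (1 - σ⁻¹)) σ := by
  refine ((((hasDerivAt_id σ).sub_const 1).const_mul (eta_p / (2 * lam))).div_const 2 |>.sub
    ((hasDerivAt_log hσ).const_mul (eta_p / (4 * lam)))).congr_deriv ?_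
  ring

theorem freeEnergy_dissipation_algebra {eta_p lam σ a : ℝ} (hetap : eta_p ≠ 0) (hlam : lam ≠ 0)
    (hσ : σ ≠ 0) :
    eta_p / (4 * lam) * (1 - σ⁻¹) * (2 * a * σ + (1 - σ) / lam)
      = a * (eta_p / (2 * lam) * (σ - 1)) - (eta_p / (2 * lam) * (σ - 1)) ^ 2 / (eta_p * σ) := by
  field_simp
  ring

theorem free_energy_dissipation_identity_general
    (eta_p lam : ℝ) (hetap : 0 < eta_p) (hlam : 0 < lam)
    (u sigma : ℝ × ℝ → ℝ) (hsigma : ContDiff ℝ 1 sigma)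
    (hpos : ∀ p, 0 < sigma p)
    (heq : ∀ t x : ℝ,
      deriv (fun s => sigma (s, x)) t + u (t, x) * deriv (fun y => sigma (t, y)) x
        = 2 * deriv (fun y => u (t, y)) x * sigma (t, x) + (1 - sigma (t, x)) / lam) :
    ∀ t x : ℝ,
      deriv (fun s => eta_p / (2 * lam) * (sigma (s, x) - 1) / 2 -
        eta_p / (4 * lam) * Real.log (sigma (s, x))) t +
      u (t, x) * deriv (fun y => eta_p / (2 * lam) * (sigma (t, y) - 1) / 2 -
        eta_p / (4 * lam) * Real.log (sigma (t, y))) x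
      = deriv (fun y => u (t, y)) x * (eta_p / (2 * lam) * (sigma (t, x) - 1)) -
        (eta_p / (2 * lam) * (sigma (t, x) - 1)) ^ 2 / (eta_p * sigma (t, x)) := by
  intro t x
  have hσ : sigma (t, x) ≠ 0 := (hpos (t, x)).ne'
  have hchain := material_deriv_comp (v := u (t, x)) (hasDerivAt_freeEnergy eta_p lam hσ)
    ((hsigma.differentiable one_ne_zero) (t, x))
  unfold freeEnergy at hchain
  rw [hchain, heq t x]
  exact freeEnergy_dissipation_algebra hetap.ne' hlam.ne' hσ

/-- Free-energy dissipation identity along the flow: with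
`τ = (η_p/(2λ))(σ - 1)`, the free energy density `τ/2 - (η_p/(4λ)) log σ`
satisfies the pointwise transport identity
`∂t(·) + u ∂x(·) = (∂x u) τ - τ²/(η_p σ)`. -/
theorem free_energy_dissipation_identity
    (eta_p lam : ℝ) (hetap : 0 < eta_p) (hlam : 0 < lam)
    (u sigma : ℝ × ℝ → ℝ) (hu : ContDiff ℝ 1 u) (hsigma : ContDiff ℝ 1 sigma)
    (hpos : ∀ p, 0 < sigma p)
    (heq : ∀ t x : ℝ,
      deriv (fun s => sigma (s, x)) t + u (t, x) * deriv (fun y => sigma (t, y)) x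
        = 2 * deriv (fun y => u (t, y)) x * sigma (t, x) + (1 - sigma (t, x)) / lam) :
    ∀ t x : ℝ,
      deriv (fun s => eta_p / (2 * lam) * (sigma (s, x) - 1) / 2 -
        eta_p / (4 * lam) * Real.log (sigma (s, x))) t +
      u (t, x) * deriv (fun y => eta_p / (2 * lam) * (sigma (t, y) - 1) / 2 -
        eta_p / (4 * lam) * Real.log (sigma (t, y))) x
      = deriv (fun y => u (t, y)) x * (eta_p / (2 * lam) * (sigma (t, x) - 1)) -
        (eta_p / (2 * lam) * (sigma (t, x) - 1)) ^ 2 / (eta_p * sigma (t, x)) :=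
  free_energy_dissipation_identity_general eta_p lam hetap hlam u sigma hsigma hpos heq
end
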